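/- arXiv:2205.05290 — 5 statements merged into one kernel-verified Lean document; each statement's English description precedes it below -/
import Mathlib

section
/- Let ρ be a density matrix on ℂ^{d1}⊗ℂ^{d2}, i.e. a Hermitian positive semidefinite trace-one complex matrix indexed by (Fin d1 × Fin d2), and let H1, H2 be Hermitian matrices of sizes d1×d1 and d2×d2. Let ρ_A(i,i') = ∑_k ρ((i,k),(i',k)) and ρ_B(k,k') = ∑_i ρ((i,k),(i,k')) be the two marginals, and let H = H1 ⊗ I_{d2} + I_{d1} ⊗ H2 (Kronecker products). Then pe_H(ρ) ≤ pe_{H1}(ρ_A) + pe_{H2}(ρ_B), where pe_K(σ) denotes the infimum over unitary matrices U (of the appropriate size) of Re(Tr(U σ U† K)). -/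
open Matrix ComplexOrder Kronecker

/-- Passive-state energy of `σ` relative to `K`: the infimum over unitaries `U`
of `Re Tr(U σ U† K)`. -/
noncomputable def pe {n : Type*} [Fintype n] [DecidableEq n]
    (K σ : Matrix n n ℂ) : ℝ :=
  ⨅ U : Matrix.unitaryGroup n ℂ,
    (((U : Matrix n n ℂ) * σ * (U : Matrix n n ℂ)ᴴ * K).trace).re

-- entry bound for PSD trace-one matrices
lemma psd_entry_norm_le {n : Type*} [Fintype n] [DecidableEq n]
    (σ : Matrix n n ℂ) (hσ : σ.PosSemidef) (htr : σ.trace = 1) (i j : n) :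
    ‖σ i j‖ ≤ 1 := by
  open scoped MatrixOrder Matrix.Norms.L2Operator in
  obtain ⟨B, hB⟩ := CStarAlgebra.nonneg_iff_eq_star_mul_self.mp hσ.nonneg
  rw [Matrix.star_eq_conjTranspose] at hB
  subst hB
  have hdiag : ∀ k, ((Bᴴ * B) k k).re = ∑ m, ‖B m k‖ ^ 2 := by
    intro k
    simp only [Matrix.mul_apply, Matrix.conjTranspose_apply, Complex.re_sum]
    apply Finset.sum_congr rfl
    intro m _
    rw [Complex.mul_re]
    simp [← Complex.sq_norm, Complex.sq_norm, Complex.normSq_apply]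
  have htr' : ∑ k, ∑ m, ‖B m k‖ ^ 2 = 1 := by
    have : ((Bᴴ * B).trace).re = 1 := by rw [htr]; simp
    rw [Matrix.trace, Complex.re_sum] at this
    simp only [Matrix.diag] at this
    rwa [Finset.sum_congr rfl (fun k _ => hdiag k)] at this
  have hnn : ∀ k, (0:ℝ) ≤ ∑ m, ‖B m k‖ ^ 2 :=
    fun k => Finset.sum_nonneg fun m _ => sq_nonneg _
  have hle : ‖(Bᴴ * B) i j‖ ≤ (∑ m, ‖B m i‖ ^ 2 + ∑ m, ‖B m j‖ ^ 2) / 2 := by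
    calc ‖(Bᴴ * B) i j‖ ≤ ∑ m, ‖(starRingEnd ℂ) (B m i) * B m j‖ := by
          simpa [Matrix.mul_apply, Matrix.conjTranspose_apply] using
            norm_sum_le Finset.univ (fun m => (starRingEnd ℂ) (B m i) * B m j)
      _ ≤ ∑ m, (‖B m i‖ ^ 2 + ‖B m j‖ ^ 2) / 2 := by
          apply Finset.sum_le_sum
          intro m _
          rw [norm_mul, RCLike.norm_conj]
          nlinarith [sq_nonneg (‖B m i‖ - ‖B m j‖), norm_nonneg (B m i), norm_nonneg (B m j)]
      _ = (∑ m, ‖B m i‖ ^ 2 + ∑ m, ‖B m j‖ ^ 2) / 2 := by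
          rw [← Finset.sum_add_distrib, Finset.sum_div]
  rcases eq_or_ne i j with rfl | hij
  · have : ∑ m, ‖B m i‖ ^ 2 ≤ 1 := by
      rw [← htr']
      exact Finset.single_le_sum (fun k _ => hnn k) (Finset.mem_univ i)
    linarith
  · have : ∑ m, ‖B m i‖ ^ 2 + ∑ m, ‖B m j‖ ^ 2 ≤ 2 := by
      have hsub : ({i, j} : Finset n) ⊆ Finset.univ := Finset.subset_univ _
      have := Finset.sum_le_sum_of_subset_of_nonneg hsub
        (fun k _ _ => hnn k) (f := fun k => ∑ m, ‖B m k‖ ^ 2)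
      rw [Finset.sum_pair hij, htr'] at this
      linarith
    linarith

-- lower bound on Re Tr (σ * H)
lemma trace_re_lower {n : Type*} [Fintype n] [DecidableEq n]
    (σ H : Matrix n n ℂ) (hσ : σ.PosSemidef) (htr : σ.trace = 1) :
    -(∑ i, ∑ j, ‖H j i‖) ≤ ((σ * H).trace).re := by
  have h1 : ((σ * H).trace).re = ∑ i, ∑ j, (σ i j * H j i).re := by
    simp [Matrix.trace, Matrix.mul_apply, Complex.re_sum, Matrix.diag]
  rw [h1, ← Finset.sum_neg_distrib]
  apply Finset.sum_le_sum
  intro i _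
  rw [← Finset.sum_neg_distrib]
  apply Finset.sum_le_sum
  intro j _
  have h2 : ‖σ i j * H j i‖ ≤ ‖H j i‖ := by
    rw [norm_mul]
    calc ‖σ i j‖ * ‖H j i‖ ≤ 1 * ‖H j i‖ := by
          apply mul_le_mul_of_nonneg_right (psd_entry_norm_le σ hσ htr i j) (norm_nonneg _)
      _ = ‖H j i‖ := one_mul _
  have := abs_le.mp (Complex.abs_re_le_norm (σ i j * H j i))
  have h3 : ‖σ i j * H j i‖ = ‖σ i j * H j i‖ := rfl
  linarith [this.1]

lemma kron_conjTranspose {l m p q : Type*} (A : Matrix l m ℂ) (B : Matrix p q ℂ) :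
    (A ⊗ₖ B)ᴴ = Aᴴ ⊗ₖ Bᴴ := by
  ext ⟨i, k⟩ ⟨j, l⟩
  simp [Matrix.conjTranspose_apply, mul_comm]



lemma kron_trace_left {d1 d2 : ℕ} (K : Matrix (Fin d1) (Fin d1) ℂ)
    (ρ : Matrix (Fin d1 × Fin d2) (Fin d1 × Fin d2) ℂ) :
    ((K ⊗ₖ (1 : Matrix (Fin d2) (Fin d2) ℂ)) * ρ).trace
      = (K * Matrix.of fun i i' => ∑ k, ρ (i, k) (i', k)).trace := by
  simp only [Matrix.trace, Matrix.diag, Matrix.mul_apply, Fintype.sum_prod_type,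
    Matrix.kroneckerMap_apply, Matrix.one_apply, Matrix.of_apply, mul_ite, mul_one, mul_zero,
    ite_mul, zero_mul, Finset.sum_ite_eq, Finset.mem_univ, if_true, Finset.mul_sum]
  apply Finset.sum_congr rfl
  intro i _
  rw [Finset.sum_comm]

lemma kron_trace_right {d1 d2 : ℕ} (K : Matrix (Fin d2) (Fin d2) ℂ)
    (ρ : Matrix (Fin d1 × Fin d2) (Fin d1 × Fin d2) ℂ) :
    (((1 : Matrix (Fin d1) (Fin d1) ℂ) ⊗ₖ K) * ρ).trace
      = (K * Matrix.of fun k k' => ∑ i, ρ (i, k) (i, k')).trace := by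
  simp only [Matrix.trace, Matrix.diag, Matrix.mul_apply, Fintype.sum_prod_type,
    Matrix.kroneckerMap_apply, Matrix.one_apply, Matrix.of_apply, mul_ite, mul_one, mul_zero,
    ite_mul, zero_mul, Finset.sum_ite_eq, Finset.mem_univ, if_true, Finset.mul_sum]
  rw [Finset.sum_comm]
  apply Finset.sum_congr rfl
  intro k _
  simp only [one_mul]
  have hcol : ∀ x : Fin d1,
      (∑ x1 : Fin d1, ∑ x2 : Fin d2, if x = x1 then K k x2 * ρ (x1, x2) (x, k) else 0)
        = ∑ x2 : Fin d2, K k x2 * ρ (x, x2) (x, k) := by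
    intro x
    rw [Finset.sum_comm]
    simp
  rw [Finset.sum_congr rfl fun x _ => hcol x, Finset.sum_comm]

lemma trace_conj_cycle {n : Type*} [Fintype n] [DecidableEq n]
    (U σ K : Matrix n n ℂ) :
    (U * σ * Uᴴ * K).trace = (σ * (Uᴴ * K * U)).trace := by
  rw [show U * σ * Uᴴ * K = U * (σ * (Uᴴ * K)) by simp [mul_assoc],
    Matrix.trace_mul_comm, mul_assoc]

/-- subadditivity of the passive-state energy across tensor factors:
for the interaction-free Hamiltonian `H = H1 ⊗ I + I ⊗ H2`,
`pe_H(ρ) ≤ pe_{H1}(ρ_A) + pe_{H2}(ρ_B)`. -/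
theorem stmt_5 (d1 d2 : ℕ)
    (ρ : Matrix (Fin d1 × Fin d2) (Fin d1 × Fin d2) ℂ)
    (hρ : ρ.PosSemidef) (htr : ρ.trace = 1)
    (H1 : Matrix (Fin d1) (Fin d1) ℂ) (H2 : Matrix (Fin d2) (Fin d2) ℂ)
    (hH1 : H1.IsHermitian) (hH2 : H2.IsHermitian) :
    pe (H1 ⊗ₖ (1 : Matrix (Fin d2) (Fin d2) ℂ)
        + (1 : Matrix (Fin d1) (Fin d1) ℂ) ⊗ₖ H2) ρ
      ≤ pe H1 (Matrix.of fun i i' => ∑ k, ρ (i, k) (i', k))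
        + pe H2 (Matrix.of fun k k' => ∑ i, ρ (i, k) (i, k')) := by
  classical
  set H : Matrix (Fin d1 × Fin d2) (Fin d1 × Fin d2) ℂ :=
    H1 ⊗ₖ (1 : Matrix (Fin d2) (Fin d2) ℂ)
      + (1 : Matrix (Fin d1) (Fin d1) ℂ) ⊗ₖ H2 with hHdef
  set ρA : Matrix (Fin d1) (Fin d1) ℂ :=
    Matrix.of fun i i' => ∑ k, ρ (i, k) (i', k) with hρA
  set ρB : Matrix (Fin d2) (Fin d2) ℂ :=
    Matrix.of fun k k' => ∑ i, ρ (i, k) (i, k') with hρB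
  have hbdd : BddBelow (Set.range fun U : Matrix.unitaryGroup (Fin d1 × Fin d2) ℂ =>
      (((U : Matrix (Fin d1 × Fin d2) (Fin d1 × Fin d2) ℂ) * ρ * (U : Matrix (Fin d1 × Fin d2) (Fin d1 × Fin d2) ℂ)ᴴ * H).trace).re) := by
    refine ⟨-(∑ i, ∑ j, ‖H j i‖), ?_⟩
    rintro x ⟨U, rfl⟩
    have hUpsd : ((U : Matrix (Fin d1 × Fin d2) (Fin d1 × Fin d2) ℂ) * ρ * (U : Matrix (Fin d1 × Fin d2) (Fin d1 × Fin d2) ℂ)ᴴ).PosSemidef :=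
      hρ.mul_mul_conjTranspose_same _
    have hUtr : ((U : Matrix (Fin d1 × Fin d2) (Fin d1 × Fin d2) ℂ) * ρ * (U : Matrix (Fin d1 × Fin d2) (Fin d1 × Fin d2) ℂ)ᴴ).trace = 1 := by
      rw [Matrix.trace_mul_cycle, ← Matrix.star_eq_conjTranspose,
        (Unitary.mem_iff.mp U.2).1, one_mul, htr]
    exact trace_re_lower _ H hUpsd hUtr
  have key : ∀ (U1 : Matrix.unitaryGroup (Fin d1) ℂ) (U2 : Matrix.unitaryGroup (Fin d2) ℂ),
      pe H ρ ≤ (((U1 : Matrix (Fin d1) (Fin d1) ℂ) * ρA * (U1 : Matrix (Fin d1) (Fin d1) ℂ)ᴴ * H1).trace).re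
        + (((U2 : Matrix (Fin d2) (Fin d2) ℂ) * ρB * (U2 : Matrix (Fin d2) (Fin d2) ℂ)ᴴ * H2).trace).re := by
    intro U1 U2
    have hU1 : (U1 : Matrix (Fin d1) (Fin d1) ℂ)ᴴ * (U1 : Matrix (Fin d1) (Fin d1) ℂ) = 1 := by
      rw [← Matrix.star_eq_conjTranspose]; exact (Unitary.mem_iff.mp U1.2).1
    have hU1' : (U1 : Matrix (Fin d1) (Fin d1) ℂ) * (U1 : Matrix (Fin d1) (Fin d1) ℂ)ᴴ = 1 := by
      rw [← Matrix.star_eq_conjTranspose]; exact (Unitary.mem_iff.mp U1.2).2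
    have hU2 : (U2 : Matrix (Fin d2) (Fin d2) ℂ)ᴴ * (U2 : Matrix (Fin d2) (Fin d2) ℂ) = 1 := by
      rw [← Matrix.star_eq_conjTranspose]; exact (Unitary.mem_iff.mp U2.2).1
    have hU2' : (U2 : Matrix (Fin d2) (Fin d2) ℂ) * (U2 : Matrix (Fin d2) (Fin d2) ℂ)ᴴ = 1 := by
      rw [← Matrix.star_eq_conjTranspose]; exact (Unitary.mem_iff.mp U2.2).2
    set W : Matrix (Fin d1 × Fin d2) (Fin d1 × Fin d2) ℂ :=
      (U1 : Matrix (Fin d1) (Fin d1) ℂ) ⊗ₖ (U2 : Matrix (Fin d2) (Fin d2) ℂ) with hWdef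
    have hWH : Wᴴ = (U1 : Matrix (Fin d1) (Fin d1) ℂ)ᴴ ⊗ₖ (U2 : Matrix (Fin d2) (Fin d2) ℂ)ᴴ := kron_conjTranspose _ _
    have hW : W ∈ Matrix.unitaryGroup (Fin d1 × Fin d2) ℂ := by
      rw [Matrix.mem_unitaryGroup_iff, Matrix.star_eq_conjTranspose, hWH, hWdef,
        ← Matrix.mul_kronecker_mul, hU1', hU2', Matrix.one_kronecker_one]
    have hle : pe H ρ ≤ ((W * ρ * Wᴴ * H).trace).re := ciInf_le hbdd ⟨W, hW⟩
    refine hle.trans_eq ?_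
    have hA : Wᴴ * (H1 ⊗ₖ (1 : Matrix (Fin d2) (Fin d2) ℂ)) * W
        = ((U1 : Matrix (Fin d1) (Fin d1) ℂ)ᴴ * H1 * (U1 : Matrix (Fin d1) (Fin d1) ℂ)) ⊗ₖ
          (1 : Matrix (Fin d2) (Fin d2) ℂ) := by
      rw [hWH, hWdef, ← Matrix.mul_kronecker_mul, ← Matrix.mul_kronecker_mul,
        Matrix.mul_one, hU2]
    have hB : Wᴴ * ((1 : Matrix (Fin d1) (Fin d1) ℂ) ⊗ₖ H2) * W
        = (1 : Matrix (Fin d1) (Fin d1) ℂ) ⊗ₖ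
          ((U2 : Matrix (Fin d2) (Fin d2) ℂ)ᴴ * H2 * (U2 : Matrix (Fin d2) (Fin d2) ℂ)) := by
      rw [hWH, hWdef, ← Matrix.mul_kronecker_mul, ← Matrix.mul_kronecker_mul,
        Matrix.mul_one, hU1]
    have hsplit : (W * ρ * Wᴴ * H).trace
        = ((((U1 : Matrix (Fin d1) (Fin d1) ℂ)ᴴ * H1 * (U1 : Matrix (Fin d1) (Fin d1) ℂ)) ⊗ₖ
            (1 : Matrix (Fin d2) (Fin d2) ℂ)) * ρ).trace
          + (((1 : Matrix (Fin d1) (Fin d1) ℂ) ⊗ₖ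
            ((U2 : Matrix (Fin d2) (Fin d2) ℂ)ᴴ * H2 * (U2 : Matrix (Fin d2) (Fin d2) ℂ))) * ρ).trace := by
      rw [trace_conj_cycle, hHdef, Matrix.mul_add, Matrix.add_mul, hA, hB,
        Matrix.mul_add, Matrix.trace_add, Matrix.trace_mul_comm ρ, Matrix.trace_mul_comm ρ]
    rw [hsplit, kron_trace_left, kron_trace_right, Complex.add_re]
    congr 2
    · rw [trace_conj_cycle, Matrix.trace_mul_comm]
    · rw [trace_conj_cycle, Matrix.trace_mul_comm]
  have h1 : ∀ U2 : Matrix.unitaryGroup (Fin d2) ℂ,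
      pe H ρ - (((U2 : Matrix (Fin d2) (Fin d2) ℂ) * ρB * (U2 : Matrix (Fin d2) (Fin d2) ℂ)ᴴ * H2).trace).re
        ≤ pe H1 ρA := by
    intro U2
    refine le_ciInf fun U1 => ?_
    linarith [key U1 U2]
  have h2 : pe H ρ - pe H1 ρA ≤ pe H2 ρB := by
    refine le_ciInf fun U2 => ?_
    linarith [h1 U2]
  linarith
end

section
/- Let ψ : Fin d1 × Fin d2 → ℂ be a unit vector with rank-one density matrix ρ = |ψ⟩⟨ψ|, and let H1, H2 be Hermitian positive semidefinite matrices (of sizes d1, d2) each having smallest eigenvalue 0. Put H = H1 ⊗ I + I ⊗ H2, and denote by ρ_A, ρ_B the marginals ρ_A(i,i') = ∑_k ρ((i,k),(i',k)), ρ_B(k,k') = ∑_i ρ((i,k),(i,k')). Define the global ergotropy W_e^g = Re Tr(ρH) − inf_{U unitary on ℂ^{d1 d2}} Re Tr(UρU†H) and the local ergotropy W_e^{A|B} = Re Tr(ρH) − inf_{U1,U2 unitary} Re Tr((U1⊗U2)ρ(U1⊗U2)†H). Then W_e^g − W_e^{A|B} = pe_{H1}(ρ_A) + pe_{H2}(ρ_B),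 where pe_K(σ) := inf over unitaries U of Re(Tr(UσU†K)). -/
open Matrix ComplexOrder Kronecker
set_option linter.unusedSectionVars false
set_option maxHeartbeats 1000000

section helpers
variable {m n : Type*} [Fintype m] [Fintype n] [DecidableEq m] [DecidableEq n]

lemma myconjT_vecMulVec (a b : n → ℂ) : (vecMulVec a b)ᴴ = vecMulVec (star b) (star a) := by
  ext i j; simp [vecMulVec_apply, conjTranspose_apply, mul_comm]

lemma mymul_vecMulVec (A : Matrix m n ℂ) (a : n → ℂ) (b : n → ℂ) :
    A * vecMulVec a b = vecMulVec (A *ᵥ a) b := by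
  ext i j; simp [vecMulVec_apply, mul_apply, mulVec, dotProduct, Finset.sum_mul, mul_assoc]

lemma myvecMulVec_mul (a : m → ℂ) (b : n → ℂ) (A : Matrix n n ℂ) :
    vecMulVec a b * A = vecMulVec a (b ᵥ* A) := by
  ext i j; simp [vecMulVec_apply, mul_apply, vecMul, dotProduct, Finset.mul_sum, mul_assoc]

lemma myvecMulVec_mul_vecMulVec (a : m → ℂ) (b c : n → ℂ) (d : n → ℂ) :
    vecMulVec a b * vecMulVec c d = (b ⬝ᵥ c) • vecMulVec a d := by
  ext i j
  simp only [mul_apply, vecMulVec_apply, Matrix.smul_apply, smul_eq_mul, dotProduct, Finset.sum_mul]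
  exact Finset.sum_congr rfl fun k _ => by ring

lemma myvecMulVec_mulVec (a : m → ℂ) (b : n → ℂ) (x : n → ℂ) :
    vecMulVec a b *ᵥ x = (b ⬝ᵥ x) • a := by
  ext i; simp [vecMulVec_apply, mulVec, dotProduct, Finset.sum_mul, Finset.mul_sum]
  congr 1; ext k; ring

lemma mytrace_vecMulVec_mul (a b : n → ℂ) (M : Matrix n n ℂ) :
    (vecMulVec a b * M).trace = b ⬝ᵥ (M *ᵥ a) := by
  simp only [trace, diag_apply, mul_apply, vecMulVec_apply, dotProduct, mulVec]
  rw [Finset.sum_comm]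
  congr 1; ext j; rw [Finset.mul_sum]; congr 1; ext i; ring

end helpers

section helpers2
variable {m n : Type*} [Fintype m] [Fintype n] [DecidableEq m] [DecidableEq n]

lemma myconjT_kron (A : Matrix m m ℂ) (B : Matrix n n ℂ) :
    (A ⊗ₖ B)ᴴ = Aᴴ ⊗ₖ Bᴴ := by
  ext ⟨i,k⟩ ⟨j,l⟩
  simp [conjTranspose_apply, kroneckerMap_apply, mul_comm]

lemma mytrace_mul_kron_one (X : Matrix (m × n) (m × n) ℂ) (K : Matrix m m ℂ) :
    (X * (K ⊗ₖ (1 : Matrix n n ℂ))).trace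
      = ((Matrix.of fun i i' => ∑ k, X (i, k) (i', k)) * K).trace := by
  simp only [trace, diag_apply, mul_apply, kroneckerMap_apply, Matrix.of_apply,
    Fintype.sum_prod_type, one_apply, mul_ite, mul_one, mul_zero, Finset.sum_ite_eq',
    Finset.mem_univ, if_true, Finset.sum_mul]
  exact Finset.sum_congr rfl fun i _ => by rw [Finset.sum_comm]

lemma mytrace_mul_one_kron (X : Matrix (m × n) (m × n) ℂ) (K : Matrix n n ℂ) :
    (X * ((1 : Matrix m m ℂ) ⊗ₖ K)).trace
      = ((Matrix.of fun k k' => ∑ i, X (i, k) (i, k')) * K).trace := by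
  simp only [trace, diag_apply, mul_apply, kroneckerMap_apply, Matrix.of_apply,
    Fintype.sum_prod_type, one_apply, ite_mul, one_mul, zero_mul, Finset.sum_ite_eq',
    Finset.mem_univ, if_true, Finset.sum_mul]
  have step : ∀ (x : m) (x1 : n),
      (∑ x2 : m, ∑ x3 : n, X (x, x1) (x2, x3) * if x2 = x then K x3 x1 else 0)
        = ∑ x3 : n, X (x, x1) (x, x3) * K x3 x1 := by
    intro x x1
    rw [Finset.sum_comm]
    simp [mul_ite, Finset.sum_ite_eq', Finset.mem_univ]
  simp only [step]
  rw [Finset.sum_comm]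
  exact Finset.sum_congr rfl fun x1 _ => by rw [Finset.sum_comm]

end helpers2

section helpers3
variable {m n : Type*} [Fintype m] [Fintype n] [DecidableEq m] [DecidableEq n]

lemma mydiag_nonneg {M : Matrix n n ℂ} (hM : M.PosSemidef) (i : n) : 0 ≤ M i i := by
  have := hM.dotProduct_mulVec_nonneg (Pi.single i 1)
  simpa [mulVec_single, dotProduct_single, Pi.single_apply, dotProduct,
    apply_ite, Finset.sum_ite_eq', mul_comm] using this

lemma mytrace_re_nonneg {M : Matrix n n ℂ} (hM : M.PosSemidef) : 0 ≤ (M.trace).re := by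
  rw [trace]
  have : ∀ i, 0 ≤ (M i i).re := fun i => (Complex.le_def.mp (mydiag_nonneg hM i)).1
  calc (0:ℝ) ≤ ∑ i, (M i i).re := Finset.sum_nonneg fun i _ => this i
    _ = _ := by simp [diag, Complex.re_sum]

open scoped MatrixOrder in
lemma mytrace_mul_re_nonneg {A B : Matrix n n ℂ} (hA : A.PosSemidef) (hB : B.PosSemidef) :
    0 ≤ ((A * B).trace).re := by
  have hS := (CFC.sqrt_nonneg A).posSemidef
  have h1 : A * B = CFC.sqrt A * (CFC.sqrt A * B) := by rw [← mul_assoc, CFC.sqrt_mul_sqrt_self A hA.nonneg]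
  have h2 : ((A * B).trace) = ((CFC.sqrt A * B * CFC.sqrt A).trace) := by
    rw [h1, trace_mul_comm, mul_assoc]
  have h3 : (CFC.sqrt A * B * CFC.sqrt A).PosSemidef := by
    have := hB.conjTranspose_mul_mul_same (CFC.sqrt A)
    rwa [hS.isHermitian.eq] at this
  rw [h2]
  exact mytrace_re_nonneg h3

lemma mypsd_kron_one {K : Matrix m m ℂ} (hK : K.PosSemidef) :
    (K ⊗ₖ (1 : Matrix n n ℂ)).PosSemidef := by
  refine PosSemidef.of_dotProduct_mulVec_nonneg ?_ ?_
  · show _ = _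
    have : (K ⊗ₖ (1 : Matrix n n ℂ))ᴴ = Kᴴ ⊗ₖ (1 : Matrix n n ℂ)ᴴ := by
      ext ⟨i,k⟩ ⟨j,l⟩
      simp [conjTranspose_apply, kroneckerMap_apply, mul_comm, one_apply,
        apply_ite (starRingEnd ℂ), eq_comm]
    rw [this, hK.1.eq, conjTranspose_one]
  · intro x
    have hx : star x ⬝ᵥ (K ⊗ₖ (1 : Matrix n n ℂ)) *ᵥ x
        = ∑ k : n, star (fun i => x (i,k)) ⬝ᵥ K *ᵥ (fun i => x (i,k)) := by
      simp only [dotProduct, mulVec, kroneckerMap_apply, Fintype.sum_prod_type, one_apply,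
        mul_ite, mul_one, mul_zero, ite_mul, zero_mul, Pi.star_apply, Finset.sum_ite_eq,
        Finset.mem_univ, if_true]
      rw [Finset.sum_comm]
    rw [hx]
    exact Finset.sum_nonneg fun k _ => hK.dotProduct_mulVec_nonneg _

end helpers3

section helpers4
variable {m n : Type*} [Fintype m] [Fintype n] [DecidableEq m] [DecidableEq n]

lemma mypsd_one_kron {K : Matrix n n ℂ} (hK : K.PosSemidef) :
    ((1 : Matrix m m ℂ) ⊗ₖ K).PosSemidef := by
  refine PosSemidef.of_dotProduct_mulVec_nonneg ?_ ?_
  · show _ = _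
    have : ((1 : Matrix m m ℂ) ⊗ₖ K)ᴴ = (1 : Matrix m m ℂ)ᴴ ⊗ₖ Kᴴ := by
      ext ⟨i,k⟩ ⟨j,l⟩
      simp [conjTranspose_apply, kroneckerMap_apply, mul_comm, one_apply,
        apply_ite (starRingEnd ℂ), eq_comm]
    rw [this, hK.1.eq, conjTranspose_one]
  · intro x
    have hx : star x ⬝ᵥ ((1 : Matrix m m ℂ) ⊗ₖ K) *ᵥ x
        = ∑ i : m, star (fun k => x (i,k)) ⬝ᵥ K *ᵥ (fun k => x (i,k)) := by
      simp only [dotProduct, mulVec, kroneckerMap_apply, Fintype.sum_prod_type, one_apply,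
        ite_mul, one_mul, zero_mul, Pi.star_apply, Finset.sum_ite_eq,
        Finset.mem_univ, if_true]
      refine Finset.sum_congr rfl fun i _ => Finset.sum_congr rfl fun k _ => ?_
      congr 1
      rw [Finset.sum_comm]
      simp [Finset.sum_ite_eq]
    rw [hx]
    exact Finset.sum_nonneg fun k _ => hK.dotProduct_mulVec_nonneg _

lemma mypsd_vecMulVec (ψ : n → ℂ) : (vecMulVec ψ (star ψ)).PosSemidef := by
  refine PosSemidef.of_dotProduct_mulVec_nonneg ?_ ?_
  · ext i j
    simp [conjTranspose_apply, vecMulVec_apply, Pi.star_apply, mul_comm]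
  · intro x
    have : vecMulVec ψ (star ψ) *ᵥ x = (star ψ ⬝ᵥ x) • ψ := by
      ext i; simp [vecMulVec_apply, mulVec, dotProduct, Finset.sum_mul, Finset.mul_sum]
      exact Finset.sum_congr rfl fun k _ => by ring
    rw [this]
    have : star x ⬝ᵥ (star ψ ⬝ᵥ x) • ψ = (star ψ ⬝ᵥ x) * star (star ψ ⬝ᵥ x) := by
      simp [dotProduct, Finset.mul_sum, Finset.sum_mul, star_sum]
      exact Finset.sum_congr rfl fun a _ => Finset.sum_congr rfl fun i _ => by ring
    rw [this, mul_comm]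
    exact star_mul_self_nonneg _

end helpers4

lemma myiInf_add {α β : Type*} [Nonempty α] [Nonempty β] (f : α → ℝ) (g : β → ℝ)
    (hf : ∀ a, 0 ≤ f a) (hg : ∀ b, 0 ≤ g b) :
    (⨅ p : α × β, (f p.1 + g p.2)) = (⨅ a, f a) + ⨅ b, g b := by
  have hbf : BddBelow (Set.range f) := ⟨0, by rintro _ ⟨a, rfl⟩; exact hf a⟩
  have hbg : BddBelow (Set.range g) := ⟨0, by rintro _ ⟨b, rfl⟩; exact hg b⟩
  have hb : BddBelow (Set.range fun p : α × β => f p.1 + g p.2) :=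
    ⟨0, by rintro _ ⟨p, rfl⟩; exact add_nonneg (hf p.1) (hg p.2)⟩
  apply le_antisymm
  · have h1 : ∀ a b, (⨅ p : α × β, (f p.1 + g p.2)) ≤ f a + g b :=
      fun a b => ciInf_le hb (a, b)
    have h2 : ∀ a, (⨅ p : α × β, (f p.1 + g p.2)) - f a ≤ ⨅ b, g b :=
      fun a => le_ciInf fun b => by linarith [h1 a b]
    have h4 : (⨅ p : α × β, (f p.1 + g p.2)) - (⨅ b, g b) ≤ ⨅ a, f a :=
      le_ciInf fun a => by linarith [h2 a]
    linarith
  · exact le_ciInf fun p => add_le_add (ciInf_le hbf p.1) (ciInf_le hbg p.2)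

lemma mystar_dot {n : Type*} [Fintype n] (a b : n → ℂ) :
    star a ⬝ᵥ b = star (star b ⬝ᵥ a) := by
  simp [dotProduct, Finset.sum_comm, star_sum, mul_comm]

lemma myexists_unitary {n : Type*} [Fintype n] [DecidableEq n] (ψ φ : n → ℂ)
    (hψ : star ψ ⬝ᵥ ψ = 1) (hφ : star φ ⬝ᵥ φ = 1) :
    ∃ U ∈ Matrix.unitaryGroup n ℂ, ∃ c : ℂ, U *ᵥ ψ = c • φ := by
  classical
  set z : ℂ := star φ ⬝ᵥ ψ with hz
  obtain ⟨c, r, hc, hr0, hrz⟩ :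
      ∃ (c : ℂ) (r : ℝ), star c * c = 1 ∧ r ≤ 0 ∧ star c * z = (r : ℂ) := by
    by_cases h0 : z = 0
    · exact ⟨1, 0, by simp, le_rfl, by simp [h0]⟩
    · refine ⟨-(z / (‖z‖ : ℂ)), -(‖z‖), ?_, ?_, ?_⟩
      · have : (‖z‖ : ℂ) ≠ 0 := by
          simpa using (norm_ne_zero_iff.mpr h0)
        field_simp [Complex.star_def]
        have hzz : (starRingEnd ℂ) z * z = (‖z‖ : ℂ) ^ 2 := Complex.conj_mul' z
        rw [star_neg, star_div₀, Complex.star_def, Complex.conj_ofReal, mul_neg, neg_neg,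
          ← mul_div_assoc, mul_comm z, hzz, pow_two, mul_div_assoc, div_self this, mul_one]
      · simp [norm_nonneg]
      · have : (‖z‖ : ℂ) ≠ 0 := by
          simpa using (norm_ne_zero_iff.mpr h0)
        field_simp [Complex.star_def]
        have hzz : (starRingEnd ℂ) z * z = (‖z‖ : ℂ) ^ 2 := Complex.conj_mul' z
        rw [star_neg, star_div₀, Complex.star_def, Complex.conj_ofReal, mul_neg,
          ← mul_div_assoc, mul_comm z, hzz, pow_two, mul_div_assoc, div_self this, mul_one]
        simp
  set w : n → ℂ := ψ - c • φ with hw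
  have hsφψ : star (c • φ) ⬝ᵥ ψ = (r : ℂ) := by
    rw [star_smul, smul_dotProduct, ← hz, smul_eq_mul, hrz]
  have hsψφ : star ψ ⬝ᵥ (c • φ) = (r : ℂ) := by
    rw [mystar_dot, hsφψ]
    simp [Complex.star_def, Complex.conj_ofReal]
  have hwψ : star w ⬝ᵥ ψ = ((1 - r : ℝ) : ℂ) := by
    rw [hw, star_sub, sub_dotProduct, hψ, hsφψ]
    push_cast; ring
  have hcφ : star (c • φ) ⬝ᵥ (c • φ) = 1 := by
    rw [star_smul, smul_dotProduct, dotProduct_smul, smul_eq_mul, smul_eq_mul, hφ]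
    rw [mul_one, hc]
  have hν : star w ⬝ᵥ w = ((2 - 2 * r : ℝ) : ℂ) := by
    rw [hw, star_sub, sub_dotProduct, dotProduct_sub, dotProduct_sub, hψ, hsψφ, hsφψ, hcφ]
    push_cast; ring
  have hνpos : (0 : ℝ) < 2 - 2 * r := by linarith
  have hνne : ((2 - 2 * r : ℝ) : ℂ) ≠ 0 := by
    exact_mod_cast ne_of_gt hνpos
  set k : ℂ := 2 / ((2 - 2 * r : ℝ) : ℂ) with hk
  set W : Matrix n n ℂ := vecMulVec w (star w) with hW
  set U : Matrix n n ℂ := 1 - k • W with hU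
  have hWH : Wᴴ = W := by rw [hW, myconjT_vecMulVec, star_star]
  have hUstar : star U = U := by
    rw [hU]
    have : star (k • W) = (star k) • Wᴴ := by
      rw [star_smul]; rfl
    rw [star_sub, this, hWH]
    congr 1
    · simp [star_one]
    · congr 1
      rw [hk, star_div₀]
      simp [Complex.star_def, Complex.conj_ofReal]
  have hWW : W * W = ((2 - 2 * r : ℝ) : ℂ) • W := by
    rw [hW, myvecMulVec_mul_vecMulVec, hν]
  have hUU : U * U = 1 := by
    have hne : (2 - 2 * (r:ℂ)) ≠ 0 := by exact_mod_cast hνne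
    have hcoef : (k * k) * ((2 - 2 * r : ℝ) : ℂ) = 2 * k := by
      rw [hk]; push_cast; field_simp
    have hgen : ∀ A : Matrix n n ℂ, (1 - A) * (1 - A) = 1 - A - A + A * A :=
      fun A => by noncomm_ring
    have h1 : U * U = 1 - k • W - k • W + (k • W) * (k • W) := by
      rw [hU, hgen]
    have h2 : (k • W) * (k • W) = (k * k) • (W * W) := by
      rw [smul_mul_assoc, mul_smul_comm, smul_smul]
    rw [h1, h2, hWW, smul_smul, hcoef, two_mul, add_smul]
    abel
  have hmem : U ∈ Matrix.unitaryGroup n ℂ := by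
    rw [Matrix.mem_unitaryGroup_iff']
    rw [show star U = U from hUstar, hUU]
  refine ⟨U, hmem, c, ?_⟩
  have hWψ : W *ᵥ ψ = ((1 - r : ℝ) : ℂ) • w := by
    rw [hW, myvecMulVec_mulVec, hwψ]
  have hk1 : k * ((1 - r : ℝ) : ℂ) = 1 := by
    rw [hk]
    have : ((2 - 2 * r : ℝ) : ℂ) = 2 * ((1 - r : ℝ) : ℂ) := by push_cast; ring
    rw [this]
    have h1r : ((1 - r : ℝ) : ℂ) ≠ 0 := by
      exact_mod_cast ne_of_gt (by linarith : (0:ℝ) < 1 - r)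
    rw [div_mul_eq_mul_div]
    exact div_self (mul_ne_zero two_ne_zero h1r)
  rw [hU, sub_mulVec, one_mulVec, smul_mulVec, hWψ, smul_smul, hk1, one_smul, hw]
  abel

lemma mytrace_conj {n : Type*} [Fintype n] (A B C : Matrix n n ℂ) :
    (A * B * Aᴴ * C).trace = (B * (Aᴴ * C * A)).trace := by
  rw [trace_mul_cycle (A * B) Aᴴ C, trace_mul_cycle C (A * B) Aᴴ, ← mul_assoc, trace_mul_comm]
/-- for a pure bipartite state, the bi-separable ergotropic gap
`W_e^g − W_e^{A|B}` equals the sum of the passive-state energies of the two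
marginals (Eq. (bseg) of the paper). -/
theorem stmt_6 (d1 d2 : ℕ) (ψ : Fin d1 × Fin d2 → ℂ)
    (hψ : ∑ x, ‖ψ x‖ ^ 2 = 1)
    (H1 : Matrix (Fin d1) (Fin d1) ℂ) (H2 : Matrix (Fin d2) (Fin d2) ℂ)
    (hH1 : H1.PosSemidef) (hH2 : H2.PosSemidef)
    (hmin1 : IsLeast (Set.range hH1.isHermitian.eigenvalues) 0)
    (hmin2 : IsLeast (Set.range hH2.isHermitian.eigenvalues) 0) :
    let ρ : Matrix (Fin d1 × Fin d2) (Fin d1 × Fin d2) ℂ :=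
      Matrix.of fun x y => ψ x * star (ψ y)
    let H : Matrix (Fin d1 × Fin d2) (Fin d1 × Fin d2) ℂ :=
      H1 ⊗ₖ (1 : Matrix (Fin d2) (Fin d2) ℂ) + (1 : Matrix (Fin d1) (Fin d1) ℂ) ⊗ₖ H2
    let Weg : ℝ := ((ρ * H).trace).re -
      ⨅ U : Matrix.unitaryGroup (Fin d1 × Fin d2) ℂ,
        (((U : Matrix (Fin d1 × Fin d2) (Fin d1 × Fin d2) ℂ) * ρ *
          (U : Matrix (Fin d1 × Fin d2) (Fin d1 × Fin d2) ℂ)ᴴ * H).trace).re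
    let Wel : ℝ := ((ρ * H).trace).re -
      ⨅ V : Matrix.unitaryGroup (Fin d1) ℂ × Matrix.unitaryGroup (Fin d2) ℂ,
        ((((V.1 : Matrix (Fin d1) (Fin d1) ℂ) ⊗ₖ (V.2 : Matrix (Fin d2) (Fin d2) ℂ)) * ρ *
          ((V.1 : Matrix (Fin d1) (Fin d1) ℂ) ⊗ₖ (V.2 : Matrix (Fin d2) (Fin d2) ℂ))ᴴ * H).trace).re
    Weg - Wel = pe H1 (Matrix.of fun i i' => ∑ k, ρ (i, k) (i', k))
        + pe H2 (Matrix.of fun k k' => ∑ i, ρ (i, k) (i, k')) := by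
  classical
  intro ρ H Weg Wel
  haveI : Nonempty (Matrix.unitaryGroup (Fin d1) ℂ) := ⟨1⟩
  haveI : Nonempty (Matrix.unitaryGroup (Fin d2) ℂ) := ⟨1⟩
  have hρdef : ρ = vecMulVec ψ (star ψ) := by
    ext x y; simp [vecMulVec_apply, ρ]
  have hHdef : H = H1 ⊗ₖ (1 : Matrix (Fin d2) (Fin d2) ℂ)
      + (1 : Matrix (Fin d1) (Fin d1) ℂ) ⊗ₖ H2 := rfl
  have hρpsd : ρ.PosSemidef := by rw [hρdef]; exact mypsd_vecMulVec ψ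
  have hHpsd : H.PosSemidef := by
    rw [hHdef]; exact (mypsd_kron_one hH1).add (mypsd_one_kron hH2)
  set ρA : Matrix (Fin d1) (Fin d1) ℂ :=
    Matrix.of fun i i' => ∑ k, ρ (i, k) (i', k) with hρA
  set ρB : Matrix (Fin d2) (Fin d2) ℂ :=
    Matrix.of fun k k' => ∑ i, ρ (i, k) (i, k') with hρB
  have hρApsd : ρA.PosSemidef := by
    have h : ρA = (Matrix.of fun i k => ψ (i, k)) * (Matrix.of fun i k => ψ (i, k))ᴴ := by
      ext i i'
      simp [hρA, mul_apply, conjTranspose_apply, ρ]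
    rw [h]; exact posSemidef_self_mul_conjTranspose _
  have hρBpsd : ρB.PosSemidef := by
    have h : ρB = (Matrix.of fun k i => ψ (i, k)) * (Matrix.of fun k i => ψ (i, k))ᴴ := by
      ext k k'
      simp [hρB, mul_apply, conjTranspose_apply, ρ]
    rw [h]; exact posSemidef_self_mul_conjTranspose _
  have hfA : ∀ U : Matrix.unitaryGroup (Fin d1) ℂ,
      0 ≤ (((U : Matrix (Fin d1) (Fin d1) ℂ) * ρA *
        (U : Matrix (Fin d1) (Fin d1) ℂ)ᴴ * H1).trace).re :=
    fun U => mytrace_mul_re_nonneg (hρApsd.mul_mul_conjTranspose_same _) hH1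
  have hfB : ∀ U : Matrix.unitaryGroup (Fin d2) ℂ,
      0 ≤ (((U : Matrix (Fin d2) (Fin d2) ℂ) * ρB *
        (U : Matrix (Fin d2) (Fin d2) ℂ)ᴴ * H2).trace).re :=
    fun U => mytrace_mul_re_nonneg (hρBpsd.mul_mul_conjTranspose_same _) hH2
  -- normalization of ψ
  have hψ' : star ψ ⬝ᵥ ψ = 1 := by
    have h1 : ∀ x, star (ψ x) * ψ x = ((‖ψ x‖ ^ 2 : ℝ) : ℂ) := fun x => by
      rw [Complex.star_def, mul_comm, Complex.mul_conj, Complex.normSq_eq_norm_sq]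
    simp only [dotProduct, Pi.star_apply, h1]
    rw [← Complex.ofReal_sum, hψ, Complex.ofReal_one]
  -- ground eigenvectors
  obtain ⟨j1, hj1⟩ := hmin1.1
  obtain ⟨j2, hj2⟩ := hmin2.1
  set v1 : Fin d1 → ℂ := ⇑(hH1.isHermitian.eigenvectorBasis j1) with hv1def
  set v2 : Fin d2 → ℂ := ⇑(hH2.isHermitian.eigenvectorBasis j2) with hv2def
  have hv1 : H1 *ᵥ v1 = 0 := by
    rw [hv1def, hH1.isHermitian.mulVec_eigenvectorBasis, hj1, zero_smul]
  have hv2 : H2 *ᵥ v2 = 0 := by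
    rw [hv2def, hH2.isHermitian.mulVec_eigenvectorBasis, hj2, zero_smul]
  have hv1n : star v1 ⬝ᵥ v1 = 1 := by
    have h := orthonormal_iff_ite.mp (hH1.isHermitian.eigenvectorBasis).orthonormal j1 j1
    simp only [if_pos rfl, PiLp.inner_apply, RCLike.inner_apply] at h
    simpa [dotProduct, Pi.star_apply, Complex.star_def, hv1def, mul_comm] using h
  have hv2n : star v2 ⬝ᵥ v2 = 1 := by
    have h := orthonormal_iff_ite.mp (hH2.isHermitian.eigenvectorBasis).orthonormal j2 j2
    simp only [if_pos rfl, PiLp.inner_apply, RCLike.inner_apply] at h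
    simpa [dotProduct, Pi.star_apply, Complex.star_def, hv2def, mul_comm] using h
  set φ : Fin d1 × Fin d2 → ℂ := fun p => v1 p.1 * v2 p.2 with hφdef
  have hφn : star φ ⬝ᵥ φ = 1 := by
    have h : star φ ⬝ᵥ φ = (star v1 ⬝ᵥ v1) * (star v2 ⬝ᵥ v2) := by
      simp only [dotProduct, Pi.star_apply, Fintype.sum_prod_type, hφdef]
      rw [Finset.sum_mul_sum]
      exact Finset.sum_congr rfl fun i _ => Finset.sum_congr rfl fun k _ => by
        simp only [star_mul']; ring
    rw [h, hv1n, hv2n, one_mul]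
  have hHφ : H *ᵥ φ = 0 := by
    have hA : (H1 ⊗ₖ (1 : Matrix (Fin d2) (Fin d2) ℂ)) *ᵥ φ = 0 := by
      funext p
      obtain ⟨i, k⟩ := p
      have h0 : (∑ j, H1 i j * v1 j) = 0 := by
        have h := congrFun hv1 i
        simpa [mulVec, dotProduct] using h
      simp only [mulVec, dotProduct, kroneckerMap_apply, Fintype.sum_prod_type, one_apply,
        mul_ite, mul_one, mul_zero, ite_mul, zero_mul, Finset.sum_ite_eq, Finset.mem_univ,
        if_true, Pi.zero_apply, hφdef]
      have h2 : ∀ j, H1 i j * (v1 j * v2 k) = H1 i j * v1 j * v2 k := fun j => by ring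
      rw [Finset.sum_congr rfl fun j _ => h2 j, ← Finset.sum_mul, h0, zero_mul]
    have hB : ((1 : Matrix (Fin d1) (Fin d1) ℂ) ⊗ₖ H2) *ᵥ φ = 0 := by
      funext p
      obtain ⟨i, k⟩ := p
      have h0 : (∑ l, H2 k l * v2 l) = 0 := by
        have h := congrFun hv2 k
        simpa [mulVec, dotProduct] using h
      simp only [mulVec, dotProduct, kroneckerMap_apply, Fintype.sum_prod_type, one_apply,
        ite_mul, one_mul, zero_mul, Finset.sum_ite_eq, Finset.mem_univ,
        if_true, Pi.zero_apply, hφdef]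
      rw [Finset.sum_comm]
      simp only [Finset.sum_ite_eq, Finset.mem_univ, if_true]
      have h2 : ∀ l, H2 k l * (v1 i * v2 l) = v1 i * (H2 k l * v2 l) := fun l => by ring
      rw [Finset.sum_congr rfl fun l _ => h2 l, ← Finset.mul_sum, h0, mul_zero]
    rw [hHdef, add_mulVec, hA, hB, add_zero]
  obtain ⟨U0, hU0, c, hU0ψ⟩ := myexists_unitary ψ φ hψ' hφn
  -- global passive energy is zero
  have hg0 : ∀ U : Matrix.unitaryGroup (Fin d1 × Fin d2) ℂ,
      0 ≤ (((U : Matrix (Fin d1 × Fin d2) (Fin d1 × Fin d2) ℂ) * ρ *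
        (U : Matrix (Fin d1 × Fin d2) (Fin d1 × Fin d2) ℂ)ᴴ * H).trace).re :=
    fun U => mytrace_mul_re_nonneg (hρpsd.mul_mul_conjTranspose_same _) hHpsd
  have hval0 : ((U0 * ρ * U0ᴴ * H).trace).re = 0 := by
    have h1 : U0 * ρ * U0ᴴ = vecMulVec (c • φ) (star (c • φ)) := by
      rw [hρdef, mymul_vecMulVec, myvecMulVec_mul, ← star_mulVec, hU0ψ]
    rw [h1, mytrace_vecMulVec_mul, mulVec_smul, hHφ, smul_zero, dotProduct_zero]
    simp
  have hIg : (⨅ U : Matrix.unitaryGroup (Fin d1 × Fin d2) ℂ,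
      (((U : Matrix (Fin d1 × Fin d2) (Fin d1 × Fin d2) ℂ) * ρ *
        (U : Matrix (Fin d1 × Fin d2) (Fin d1 × Fin d2) ℂ)ᴴ * H).trace).re) = 0 := by
    apply le_antisymm
    · have h := ciInf_le (f := fun U : Matrix.unitaryGroup (Fin d1 × Fin d2) ℂ =>
        (((U : Matrix (Fin d1 × Fin d2) (Fin d1 × Fin d2) ℂ) * ρ *
          (U : Matrix (Fin d1 × Fin d2) (Fin d1 × Fin d2) ℂ)ᴴ * H).trace).re)
        ⟨0, by rintro x ⟨U, rfl⟩; exact hg0 U⟩ (⟨U0, hU0⟩ : Matrix.unitaryGroup _ ℂ)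
      calc _ ≤ ((U0 * ρ * U0ᴴ * H).trace).re := h
        _ = 0 := hval0
    · exact le_ciInf hg0
  -- local terms split
  have hloc : ∀ V : Matrix.unitaryGroup (Fin d1) ℂ × Matrix.unitaryGroup (Fin d2) ℂ,
      ((((V.1 : Matrix (Fin d1) (Fin d1) ℂ) ⊗ₖ (V.2 : Matrix (Fin d2) (Fin d2) ℂ)) * ρ *
        ((V.1 : Matrix (Fin d1) (Fin d1) ℂ) ⊗ₖ (V.2 : Matrix (Fin d2) (Fin d2) ℂ))ᴴ * H).trace).re
      = (((V.1 : Matrix (Fin d1) (Fin d1) ℂ) * ρA *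
          (V.1 : Matrix (Fin d1) (Fin d1) ℂ)ᴴ * H1).trace).re
        + (((V.2 : Matrix (Fin d2) (Fin d2) ℂ) * ρB *
          (V.2 : Matrix (Fin d2) (Fin d2) ℂ)ᴴ * H2).trace).re := by
    intro V
    have hV1 : (V.1 : Matrix (Fin d1) (Fin d1) ℂ)ᴴ * (V.1 : Matrix (Fin d1) (Fin d1) ℂ) = 1 := by
      have h := Matrix.mem_unitaryGroup_iff'.mp V.1.2
      rwa [star_eq_conjTranspose] at h
    have hV2 : (V.2 : Matrix (Fin d2) (Fin d2) ℂ)ᴴ * (V.2 : Matrix (Fin d2) (Fin d2) ℂ) = 1 := by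
      have h := Matrix.mem_unitaryGroup_iff'.mp V.2.2
      rwa [star_eq_conjTranspose] at h
    set M : Matrix (Fin d1 × Fin d2) (Fin d1 × Fin d2) ℂ :=
      (V.1 : Matrix (Fin d1) (Fin d1) ℂ) ⊗ₖ (V.2 : Matrix (Fin d2) (Fin d2) ℂ) with hM
    have hMH : Mᴴ * H * M
        = ((V.1 : Matrix (Fin d1) (Fin d1) ℂ)ᴴ * H1 * (V.1 : Matrix (Fin d1) (Fin d1) ℂ))
            ⊗ₖ (1 : Matrix (Fin d2) (Fin d2) ℂ)
          + (1 : Matrix (Fin d1) (Fin d1) ℂ)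
            ⊗ₖ ((V.2 : Matrix (Fin d2) (Fin d2) ℂ)ᴴ * H2 * (V.2 : Matrix (Fin d2) (Fin d2) ℂ)) := by
      rw [hM, hHdef, myconjT_kron, mul_add, add_mul, ← mul_kronecker_mul, ← mul_kronecker_mul,
        ← mul_kronecker_mul, ← mul_kronecker_mul, Matrix.mul_one, Matrix.mul_one, hV1, hV2]
    have key : (M * ρ * Mᴴ * H).trace
        = ((V.1 : Matrix (Fin d1) (Fin d1) ℂ) * ρA *
            (V.1 : Matrix (Fin d1) (Fin d1) ℂ)ᴴ * H1).trace
          + ((V.2 : Matrix (Fin d2) (Fin d2) ℂ) * ρB *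
            (V.2 : Matrix (Fin d2) (Fin d2) ℂ)ᴴ * H2).trace := by
      rw [mytrace_conj, hMH, mul_add, trace_add, mytrace_mul_kron_one, mytrace_mul_one_kron,
        ← hρA, ← hρB, mytrace_conj (V.1 : Matrix (Fin d1) (Fin d1) ℂ) ρA H1,
        mytrace_conj (V.2 : Matrix (Fin d2) (Fin d2) ℂ) ρB H2]
    rw [key, Complex.add_re]
  have hIl : (⨅ V : Matrix.unitaryGroup (Fin d1) ℂ × Matrix.unitaryGroup (Fin d2) ℂ,
      ((((V.1 : Matrix (Fin d1) (Fin d1) ℂ) ⊗ₖ (V.2 : Matrix (Fin d2) (Fin d2) ℂ)) * ρ *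
        ((V.1 : Matrix (Fin d1) (Fin d1) ℂ) ⊗ₖ (V.2 : Matrix (Fin d2) (Fin d2) ℂ))ᴴ * H).trace).re)
      = pe H1 ρA + pe H2 ρB := by
    rw [iInf_congr hloc]
    exact myiInf_add _ _ hfA hfB
  show Weg - Wel = pe H1 ρA + pe H2 ρB
  have hWeg : Weg = ((ρ * H).trace).re - 0 := by rw [← hIg]
  have hWel : Wel = ((ρ * H).trace).re - (pe H1 ρA + pe H2 ρB) := by rw [← hIl]
  rw [hWeg, hWel]; ring
end

section
/- Let u : Fin d1 → ℂ and v : Fin d2 → ℂ be unit vectors and let ψ = u ⊗ v (ψ(i,k) = u i * v k), with rank-one density matrix ρ = |ψ⟩⟨ψ| and marginals ρ_A(i,i') = ∑_k ρ((i,k),(i',k)), ρ_B(k,k') = ∑_i ρ((i,k),(i,k')). If H1, H2 are Hermitian matrices whose smallest eigenvalues are 0, then pe_{H1}(ρ_A) + pe_{H2}(ρ_B) = 0, where pe_K(σ) := inf over unitaries U of Re(Tr(UσU†K)). -/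
open Matrix ComplexOrder

lemma trace_key {d : ℕ} (u : Fin d → ℂ) (H U : Matrix (Fin d) (Fin d) ℂ) :
    ((U * Matrix.of (fun i i' => u i * star (u i')) * Uᴴ * H).trace)
      = star (U *ᵥ u) ⬝ᵥ H *ᵥ (U *ᵥ u) := by
  have hσ : (Matrix.of (fun i i' => u i * star (u i')) : Matrix (Fin d) (Fin d) ℂ)
      = vecMulVec u (star u) := rfl
  rw [hσ, show vecMulVec u (star u) = replicateCol (Fin 1) u * replicateRow (Fin 1) (star u) from vecMulVec_eq (Fin 1) u (star u), ← Matrix.mul_assoc U, ← replicateCol_mulVec,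
    Matrix.mul_assoc _ (replicateRow (Fin 1) (star u)) _, Matrix.mul_assoc,
    ← replicateRow_vecMul, ← replicateRow_vecMul, show (replicateCol (Fin 1) (U *ᵥ u) * replicateRow (Fin 1) (star u ᵥ* Uᴴ ᵥ* H)).trace = (U *ᵥ u) ⬝ᵥ (star u ᵥ* Uᴴ ᵥ* H) from trace_replicateCol_mul_replicateRow _ _, dotProduct_mulVec, star_mulVec,
    Matrix.vecMul_vecMul, dotProduct_comm]

lemma pe_pure (d : ℕ) (u : Fin d → ℂ) (hu : ∑ i, ‖u i‖ ^ 2 = 1)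
    (H : Matrix (Fin d) (Fin d) ℂ) (hH : H.IsHermitian)
    (hmin : IsLeast (Set.range hH.eigenvalues) 0) :
    pe H (Matrix.of fun i i' => u i * star (u i')) = 0 := by
  obtain ⟨j0, hj0⟩ := hmin.1
  have hPSD : H.PosSemidef := hH.posSemidef_iff_eigenvalues_nonneg.mpr fun i => hmin.2 ⟨i, rfl⟩
  have hnn : ∀ U : Matrix.unitaryGroup (Fin d) ℂ,
      0 ≤ (((U : Matrix (Fin d) (Fin d) ℂ) * Matrix.of (fun i i' => u i * star (u i'))
        * (U : Matrix (Fin d) (Fin d) ℂ)ᴴ * H).trace).re := by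
    intro U
    rw [trace_key]
    exact hPSD.re_dotProduct_nonneg _
  let u' : EuclideanSpace ℂ (Fin d) := WithLp.toLp 2 u
  have hnorm : ‖u'‖ = 1 := by
    rw [EuclideanSpace.norm_eq]
    rw [show ∑ i, ‖u' i‖ ^ 2 = 1 from hu]
    simp
  have hON : Orthonormal ℂ (({j0} : Set (Fin d)).restrict (fun _ : Fin d => u')) := by
    constructor
    · intro i; exact hnorm
    · intro i j hij
      exact absurd (Subsingleton.elim i j) hij
  obtain ⟨b, hb⟩ := hON.exists_orthonormalBasis_extension_of_card_eq (by simp)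
  have hbj0 : b j0 = u' := hb j0 rfl
  let c := hH.eigenvectorBasis
  let e := EuclideanSpace.basisFun (Fin d) ℂ
  let B : Matrix (Fin d) (Fin d) ℂ := e.toBasis.toMatrix b.toBasis
  let C : Matrix (Fin d) (Fin d) ℂ := e.toBasis.toMatrix c.toBasis
  have hBmem : B ∈ Matrix.unitaryGroup (Fin d) ℂ :=
    e.toMatrix_orthonormalBasis_mem_unitary b
  have hCmem : C ∈ Matrix.unitaryGroup (Fin d) ℂ :=
    e.toMatrix_orthonormalBasis_mem_unitary c
  have hB : ∀ i j, B i j = b j i := fun i j => rfl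
  have hC : ∀ i j, C i j = c j i := fun i j => rfl
  have hUvec : (C * Bᴴ) *ᵥ u = ⇑(c j0) := by
    have h1 : Bᴴ *ᵥ u = Pi.single j0 1 := by
      funext j
      have horth := orthonormal_iff_ite.mp b.orthonormal j j0
      rw [PiLp.inner_apply] at horth
      simp only [RCLike.inner_apply] at horth
      have : (Bᴴ *ᵥ u) j = ∑ i, (starRingEnd ℂ) (b j i) * b j0 i := by
        simp only [Matrix.mulVec, dotProduct, Matrix.conjTranspose_apply, hB, hbj0]
        exact Finset.sum_congr rfl fun i _ => rfl
      rw [this, show ∑ i, (starRingEnd ℂ) ((b j).ofLp i) * (b j0).ofLp i = ∑ x, (b j0).ofLp x * (starRingEnd ℂ) ((b j).ofLp x) from Finset.sum_congr rfl fun i _ => mul_comm _ _, horth]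
      by_cases h : j = j0 <;> simp [h, Pi.single_apply]
    rw [← Matrix.mulVec_mulVec, h1]
    funext i
    simp [hC]
  set U : Matrix.unitaryGroup (Fin d) ℂ :=
    ⟨C * Bᴴ, mul_mem hCmem (Unitary.star_mem hBmem)⟩ with hU
  have hval : (((U : Matrix (Fin d) (Fin d) ℂ) * Matrix.of (fun i i' => u i * star (u i'))
      * (U : Matrix (Fin d) (Fin d) ℂ)ᴴ * H).trace).re = 0 := by
    rw [trace_key]
    simp only [hU, hUvec]
    rw [hH.mulVec_eigenvectorBasis, hj0]
    simp
  refine le_antisymm ?_ (le_ciInf hnn)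
  calc pe H (Matrix.of fun i i' => u i * star (u i'))
      ≤ (((U : Matrix (Fin d) (Fin d) ℂ) * Matrix.of (fun i i' => u i * star (u i'))
        * (U : Matrix (Fin d) (Fin d) ℂ)ᴴ * H).trace).re :=
        ciInf_le ⟨0, fun x ⟨W, hW⟩ => hW ▸ hnn W⟩ U
    _ = 0 := hval
lemma sum_conj_mul_self_eq_one {d : ℕ} (v : Fin d → ℂ) (hv : ∑ k, ‖v k‖ ^ 2 = 1) :
    ∑ k, star (v k) * v k = 1 := by
  have h : ∀ k, star (v k) * v k = ((‖v k‖ ^ 2 : ℝ) : ℂ) := by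
    intro k
    rw [Complex.star_def, mul_comm, Complex.mul_conj']
    push_cast
    ring
  rw [Finset.sum_congr rfl fun k _ => h k, ← Complex.ofReal_sum, hv, Complex.ofReal_one]

/-- for a product pure state `ψ = u ⊗ v`, the sum of the marginal
passive-state energies vanishes when the local Hamiltonians have smallest
eigenvalue 0 (condition (C1) of Theorem 3 for pure product states). -/
theorem stmt_7 (d1 d2 : ℕ) (u : Fin d1 → ℂ) (v : Fin d2 → ℂ)
    (hu : ∑ i, ‖u i‖ ^ 2 = 1) (hv : ∑ k, ‖v k‖ ^ 2 = 1)
    (H1 : Matrix (Fin d1) (Fin d1) ℂ) (H2 : Matrix (Fin d2) (Fin d2) ℂ)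
    (hH1 : H1.IsHermitian) (hH2 : H2.IsHermitian)
    (hmin1 : IsLeast (Set.range hH1.eigenvalues) 0)
    (hmin2 : IsLeast (Set.range hH2.eigenvalues) 0) :
    let ψ : Fin d1 × Fin d2 → ℂ := fun x => u x.1 * v x.2
    let ρ : Matrix (Fin d1 × Fin d2) (Fin d1 × Fin d2) ℂ :=
      Matrix.of fun x y => ψ x * star (ψ y)
    pe H1 (Matrix.of fun i i' => ∑ k, ρ (i, k) (i', k))
      + pe H2 (Matrix.of fun k k' => ∑ i, ρ (i, k) (i, k')) = 0 := by

  intro ψ ρ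
  have hA : (Matrix.of fun i i' => ∑ k, ρ (i, k) (i', k))
      = Matrix.of fun i i' => u i * star (u i') := by
    ext i i'
    show ∑ k, (u i * v k) * star (u i' * v k) = u i * star (u i')
    have h : ∀ k, (u i * v k) * star (u i' * v k)
        = (u i * star (u i')) * (star (v k) * v k) := by
      intro k; simp only [star_mul']; ring
    rw [Finset.sum_congr rfl fun k _ => h k, ← Finset.mul_sum,
      sum_conj_mul_self_eq_one v hv, mul_one]
  have hB : (Matrix.of fun k k' => ∑ i, ρ (i, k) (i, k'))
      = Matrix.of fun k k' => v k * star (v k') := by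
    ext k k'
    show ∑ i, (u i * v k) * star (u i * v k') = v k * star (v k')
    have h : ∀ i, (u i * v k) * star (u i * v k')
        = (v k * star (v k')) * (star (u i) * u i) := by
      intro i; simp only [star_mul']; ring
    rw [Finset.sum_congr rfl fun i _ => h i, ← Finset.mul_sum,
      sum_conj_mul_self_eq_one u hu, mul_one]
  rw [hA, hB, pe_pure d1 u hu H1 hH1 hmin1, pe_pure d2 v hv H2 hH2 hmin2, add_zero]
end

section
/- Let λ0, λ1, λ2, λ3, λ4 ≥ 0 with λ0² + λ1² + λ2² + λ3² + λ4² = 1 and φ ∈ ℝ, set α := |λ1 λ4 e^{iφ} − λ2 λ3|², and define Δ_A = 1 − √(1 − 4λ0²(1 − (λ0² + λ1²))), Δ_B = 1 − √(1 − 4(λ0²(λ3² + λ4²) + α)), Δ_C = 1 − √(1 − 4(λ0²(λ2² + λ4²) + α)). Then the triangle inequalities Δ_A ≤ Δ_B + Δ_C, Δ_B ≤ Δ_C + Δ_A, and Δ_C ≤ Δ_A + Δ_B hold. -/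
set_option maxHeartbeats 4000000

private theorem tri3 (a1 a2 a3 b1 b2 b3 : ℝ) :
    Real.sqrt ((a1 + b1) ^ 2 + (a2 + b2) ^ 2 + (a3 + b3) ^ 2) ≤
      Real.sqrt (a1 ^ 2 + a2 ^ 2 + a3 ^ 2) + Real.sqrt (b1 ^ 2 + b2 ^ 2 + b3 ^ 2) := by
  have hA : (0:ℝ) ≤ a1 ^ 2 + a2 ^ 2 + a3 ^ 2 := by positivity
  have hB : (0:ℝ) ≤ b1 ^ 2 + b2 ^ 2 + b3 ^ 2 := by positivity
  have hcs : (a1 * b1 + a2 * b2 + a3 * b3) ^ 2 ≤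
      (a1 ^ 2 + a2 ^ 2 + a3 ^ 2) * (b1 ^ 2 + b2 ^ 2 + b3 ^ 2) := by
    nlinarith [sq_nonneg (a1 * b2 - a2 * b1), sq_nonneg (a1 * b3 - a3 * b1),
      sq_nonneg (a2 * b3 - a3 * b2)]
  have hd : a1 * b1 + a2 * b2 + a3 * b3 ≤
      Real.sqrt (a1 ^ 2 + a2 ^ 2 + a3 ^ 2) * Real.sqrt (b1 ^ 2 + b2 ^ 2 + b3 ^ 2) := by
    rw [← Real.sqrt_mul hA]
    calc a1 * b1 + a2 * b2 + a3 * b3 ≤ |a1 * b1 + a2 * b2 + a3 * b3| := le_abs_self _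
      _ = Real.sqrt ((a1 * b1 + a2 * b2 + a3 * b3) ^ 2) := (Real.sqrt_sq_eq_abs _).symm
      _ ≤ Real.sqrt ((a1 ^ 2 + a2 ^ 2 + a3 ^ 2) * (b1 ^ 2 + b2 ^ 2 + b3 ^ 2)) :=
          Real.sqrt_le_sqrt hcs
  have e1 : Real.sqrt (a1 ^ 2 + a2 ^ 2 + a3 ^ 2) ^ 2 = a1 ^ 2 + a2 ^ 2 + a3 ^ 2 :=
    Real.sq_sqrt hA
  have e2 : Real.sqrt (b1 ^ 2 + b2 ^ 2 + b3 ^ 2) ^ 2 = b1 ^ 2 + b2 ^ 2 + b3 ^ 2 :=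
    Real.sq_sqrt hB
  have hmain : (a1 + b1) ^ 2 + (a2 + b2) ^ 2 + (a3 + b3) ^ 2 ≤
      (Real.sqrt (a1 ^ 2 + a2 ^ 2 + a3 ^ 2) + Real.sqrt (b1 ^ 2 + b2 ^ 2 + b3 ^ 2)) ^ 2 := by
    nlinarith [hd, e1, e2]
  calc Real.sqrt ((a1 + b1) ^ 2 + (a2 + b2) ^ 2 + (a3 + b3) ^ 2)
      ≤ Real.sqrt ((Real.sqrt (a1 ^ 2 + a2 ^ 2 + a3 ^ 2) +
          Real.sqrt (b1 ^ 2 + b2 ^ 2 + b3 ^ 2)) ^ 2) := Real.sqrt_le_sqrt hmain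
    _ = _ := Real.sqrt_sq (by positivity)

private theorem tri3' (a1 a2 a3 b1 b2 b3 : ℝ) :
    Real.sqrt (a1 ^ 2 + a2 ^ 2 + a3 ^ 2) ≤
      Real.sqrt ((a1 + b1) ^ 2 + (a2 + b2) ^ 2 + (a3 + b3) ^ 2) +
        Real.sqrt (b1 ^ 2 + b2 ^ 2 + b3 ^ 2) := by
  have h := tri3 (a1 + b1) (a2 + b2) (a3 + b3) (-b1) (-b2) (-b3)
  rw [show (a1 + b1 + -b1) ^ 2 + (a2 + b2 + -b2) ^ 2 + (a3 + b3 + -b3) ^ 2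
        = a1 ^ 2 + a2 ^ 2 + a3 ^ 2 by ring,
      show (-b1) ^ 2 + (-b2) ^ 2 + (-b3) ^ 2 = b1 ^ 2 + b2 ^ 2 + b3 ^ 2 by ring] at h
  exact h

private theorem lagAux (x1 y1 x2 y2 x3 y3 x4 y4 : ℝ) :
    ((x1 ^ 2 + y1 ^ 2 + x3 ^ 2 + y3 ^ 2) - (x2 ^ 2 + y2 ^ 2 + x4 ^ 2 + y4 ^ 2)) ^ 2 +
      (2 * (x1 * x2 + y1 * y2 + x3 * x4 + y3 * y4)) ^ 2 +
      (2 * (y1 * x2 - x1 * y2 + y3 * x4 - x3 * y4)) ^ 2 ≤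
    (x1 ^ 2 + y1 ^ 2 + x2 ^ 2 + y2 ^ 2 + x3 ^ 2 + y3 ^ 2 + x4 ^ 2 + y4 ^ 2) ^ 2 := by
  nlinarith [sq_nonneg (x1 * x4 - y1 * y4 - x3 * x2 + y3 * y2),
    sq_nonneg (x1 * y4 + y1 * x4 - x3 * y2 - y3 * x2)]

private theorem ylbAux (a b y f1 f2 : ℝ) (hy : 0 ≤ y)
    (hy2 : y ^ 2 = (a - b) ^ 2 + (2 * f1) ^ 2 + (2 * f2) ^ 2) : b - a ≤ y := by
  nlinarith [hy, hy2, sq_nonneg f1, sq_nonneg f2]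

private theorem sq3Aux (x y z : ℝ) (h : x ^ 2 + y ^ 2 + z ^ 2 ≤ 0) :
    x = 0 ∧ y = 0 ∧ z = 0 := by
  refine ⟨?_, ?_, ?_⟩
  · exact pow_eq_zero_iff two_ne_zero |>.mp
      (le_antisymm (by nlinarith [sq_nonneg y, sq_nonneg z]) (sq_nonneg x))
  · exact pow_eq_zero_iff two_ne_zero |>.mp
      (le_antisymm (by nlinarith [sq_nonneg x, sq_nonneg z]) (sq_nonneg y))
  · exact pow_eq_zero_iff two_ne_zero |>.mp
      (le_antisymm (by nlinarith [sq_nonneg x, sq_nonneg y]) (sq_nonneg z))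

private theorem normScale (N a1 a2 a3 : ℝ) (hN : 0 ≤ N) :
    N * Real.sqrt (a1 ^ 2 + a2 ^ 2 + a3 ^ 2) =
      Real.sqrt ((N * a1) ^ 2 + (N * a2) ^ 2 + (N * a3) ^ 2) := by
  rw [show (N * a1) ^ 2 + (N * a2) ^ 2 + (N * a3) ^ 2 = N ^ 2 * (a1 ^ 2 + a2 ^ 2 + a3 ^ 2) by ring,
    Real.sqrt_mul (sq_nonneg N), Real.sqrt_sq hN]

private theorem qcore (c000r c000i c001r c001i c010r c010i c011r c011i c100r c100i c101r c101i c110r c110i c111r c111i Fr Fi g y : ℝ)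
    (hn : ((c000r) ^ 2 + (c000i) ^ 2 + (c001r) ^ 2 + (c001i) ^ 2 + (c100r) ^ 2 + (c100i) ^ 2 + (c101r) ^ 2 + (c101i) ^ 2) + ((c010r) ^ 2 + (c010i) ^ 2 + (c011r) ^ 2 + (c011i) ^ 2 + (c110r) ^ 2 + (c110i) ^ 2 + (c111r) ^ 2 + (c111i) ^ 2) = 1)
    (hy : 0 ≤ y)
    (hN : 0 < Fr ^ 2 + Fi ^ 2 + g ^ 2)
    (hmu : (Fr * c000r + Fi * c000i + g * c010r) ^ 2 + (Fr * c000i - Fi * c000r + g * c010i) ^ 2 + (Fr * c001r + Fi * c001i + g * c011r) ^ 2 + (Fr * c001i - Fi * c001r + g * c011i) ^ 2 + (Fr * c100r + Fi * c100i + g * c110r) ^ 2 + (Fr * c100i - Fi * c100r + g * c110i) ^ 2 + (Fr * c101r + Fi * c101i + g * c111r) ^ 2 + (Fr * c101i - Fi * c101r + g * c111i) ^ 2 = (Fr ^ 2 + Fi ^ 2 + g ^ 2) * (1 + y) / 2) :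
    y + Real.sqrt ((((c000r) ^ 2 + (c000i) ^ 2 + (c010r) ^ 2 + (c010i) ^ 2 + (c100r) ^ 2 + (c100i) ^ 2 + (c110r) ^ 2 + (c110i) ^ 2) - ((c001r) ^ 2 + (c001i) ^ 2 + (c011r) ^ 2 + (c011i) ^ 2 + (c101r) ^ 2 + (c101i) ^ 2 + (c111r) ^ 2 + (c111i) ^ 2)) ^ 2 + (2 * ((c000r) * (c001r) + (c000i) * (c001i) + (c010r) * (c011r) + (c010i) * (c011i) + (c100r) * (c101r) + (c100i) * (c101i) + (c110r) * (c111r) + (c110i) * (c111i))) ^ 2 + (2 * ((c000i) * (c001r) - (c000r) * (c001i) + (c010i) * (c011r) - (c010r) * (c011i) + (c100i) * (c101r) - (c100r) * (c101i) + (c110i) * (c111r) - (c110r) * (c111i))) ^ 2) ≤ 1 + Real.sqrt ((((c000r) ^ 2 + (c000i) ^ 2 + (c001r) ^ 2 + (c001i) ^ 2 + (c010r) ^ 2 + (c010i) ^ 2 + (c011r) ^ 2 + (c011i) ^ 2) - ((c100r) ^ 2 + (c100i) ^ 2 + (c101r) ^ 2 + (c101i) ^ 2 + (c110r) ^ 2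 + (c110i) ^ 2 + (c111r) ^ 2 + (c111i) ^ 2)) ^ 2 + (2 * ((c000r) * (c100r) + (c000i) * (c100i) + (c001r) * (c101r) + (c001i) * (c101i) + (c010r) * (c110r) + (c010i) * (c110i) + (c011r) * (c111r) + (c011i) * (c111i))) ^ 2 + (2 * ((c000i) * (c100r) - (c000r) * (c100i) + (c001i) * (c101r) - (c001r) * (c101i) + (c010i) * (c110r) - (c010r) * (c110i) + (c011i) * (c111r) - (c011r) * (c111i))) ^ 2) := by
  set u00r := Fr * c000r + Fi * c000i + g * c010r with hu00r
  set u00i := Fr * c000i - Fi * c000r + g * c010i with hu00i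
  set u01r := Fr * c001r + Fi * c001i + g * c011r with hu01r
  set u01i := Fr * c001i - Fi * c001r + g * c011i with hu01i
  set u10r := Fr * c100r + Fi * c100i + g * c110r with hu10r
  set u10i := Fr * c100i - Fi * c100r + g * c110i with hu10i
  set u11r := Fr * c101r + Fi * c101i + g * c111r with hu11r
  set u11i := Fr * c101i - Fi * c101r + g * c111i with hu11i
  set v00r := Fr * c010r - Fi * c010i - g * c000r with hv00r
  set v00i := Fr * c010i + Fi * c010r - g * c000i with hv00i
  set v01r := Fr * c011r - Fi * c011i - g * c001r with hv01r
  set v01i := Fr * c011i + Fi * c011r - g * c001i with hv01i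
  set v10r := Fr * c110r - Fi * c110i - g * c100r with hv10r
  set v10i := Fr * c110i + Fi * c110r - g * c100i with hv10i
  set v11r := Fr * c111r - Fi * c111i - g * c101r with hv11r
  set v11i := Fr * c111i + Fi * c111r - g * c101i with hv11i
  set d0 := (u00r ^ 2 + u00i ^ 2 + u10r ^ 2 + u10i ^ 2) - (u01r ^ 2 + u01i ^ 2 + u11r ^ 2 + u11i ^ 2) with hd0
  set p0 := u00r * u01r + u00i * u01i + u10r * u11r + u10i * u11i with hp0
  set q0 := u00i * u01r - u00r * u01i + u10i * u11r - u10r * u11i with hq0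
  set dA0 := (u00r ^ 2 + u00i ^ 2 + u01r ^ 2 + u01i ^ 2) - (u10r ^ 2 + u10i ^ 2 + u11r ^ 2 + u11i ^ 2) with hdA0
  set pA0 := u00r * u10r + u00i * u10i + u01r * u11r + u01i * u11i with hpA0
  set qA0 := u00i * u10r - u00r * u10i + u01i * u11r - u01r * u11i with hqA0
  set d1 := (v00r ^ 2 + v00i ^ 2 + v10r ^ 2 + v10i ^ 2) - (v01r ^ 2 + v01i ^ 2 + v11r ^ 2 + v11i ^ 2) with hd1
  set p1 := v00r * v01r + v00i * v01i + v10r * v11r + v10i * v11i with hp1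
  set q1 := v00i * v01r - v00r * v01i + v10i * v11r - v10r * v11i with hq1
  set dA1 := (v00r ^ 2 + v00i ^ 2 + v01r ^ 2 + v01i ^ 2) - (v10r ^ 2 + v10i ^ 2 + v11r ^ 2 + v11i ^ 2) with hdA1
  set pA1 := v00r * v10r + v00i * v10i + v01r * v11r + v01i * v11i with hpA1
  set qA1 := v00i * v10r - v00r * v10i + v01i * v11r - v01r * v11i with hqA1
  set m0 := u00r ^ 2 + u00i ^ 2 + u01r ^ 2 + u01i ^ 2 + u10r ^ 2 + u10i ^ 2 + u11r ^ 2 + u11i ^ 2 with hm0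
  set m1 := v00r ^ 2 + v00i ^ 2 + v01r ^ 2 + v01i ^ 2 + v10r ^ 2 + v10i ^ 2 + v11r ^ 2 + v11i ^ 2 with hm1
  set k0 := Real.sqrt (d0 ^ 2 + (2 * p0) ^ 2 + (2 * q0) ^ 2) with hk0
  set k1 := Real.sqrt (d1 ^ 2 + (2 * p1) ^ 2 + (2 * q1) ^ 2) with hk1
  clear_value u00r u00i u01r u01i u10r u10i u11r u11i v00r v00i v01r v01i v10r v10i v11r v11i d0 p0 q0 dA0 pA0 qA0 d1 p1 q1 dA1 pA1 qA1 m0 m1 k0 k1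
  have hgap0 : dA0 ^ 2 + (2 * pA0) ^ 2 + (2 * qA0) ^ 2 = d0 ^ 2 + (2 * p0) ^ 2 + (2 * q0) ^ 2 := by
    rw [hdA0, hpA0, hqA0, hd0, hp0, hq0]; ring
  have hgap1 : dA1 ^ 2 + (2 * pA1) ^ 2 + (2 * qA1) ^ 2 = d1 ^ 2 + (2 * p1) ^ 2 + (2 * q1) ^ 2 := by
    rw [hdA1, hpA1, hqA1, hd1, hp1, hq1]; ring
  have hcd : d0 + d1 = (Fr ^ 2 + Fi ^ 2 + g ^ 2) * (((c000r) ^ 2 + (c000i) ^ 2 + (c010r) ^ 2 + (c010i) ^ 2 + (c100r) ^ 2 + (c100i) ^ 2 + (c110r) ^ 2 + (c110i) ^ 2) - ((c001r) ^ 2 + (c001i) ^ 2 + (c011r) ^ 2 + (c011i) ^ 2 + (c101r) ^ 2 + (c101i) ^ 2 + (c111r) ^ 2 + (c111i) ^ 2)) := by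
    rw [hd0, hd1, hu00r, hu00i, hu01r, hu01i, hu10r, hu10i, hu11r, hu11i, hv00r, hv00i, hv01r, hv01i, hv10r, hv10i, hv11r, hv11i]; ring
  have hcp : p0 + p1 = (Fr ^ 2 + Fi ^ 2 + g ^ 2) * ((c000r) * (c001r) + (c000i) * (c001i) + (c010r) * (c011r) + (c010i) * (c011i) + (c100r) * (c101r) + (c100i) * (c101i) + (c110r) * (c111r) + (c110i) * (c111i)) := by
    rw [hp0, hp1, hu00r, hu00i, hu01r, hu01i, hu10r, hu10i, hu11r, hu11i, hv00r, hv00i, hv01r, hv01i, hv10r, hv10i, hv11r, hv11i]; ring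
  have hcq : q0 + q1 = (Fr ^ 2 + Fi ^ 2 + g ^ 2) * ((c000i) * (c001r) - (c000r) * (c001i) + (c010i) * (c011r) - (c010r) * (c011i) + (c100i) * (c101r) - (c100r) * (c101i) + (c110i) * (c111r) - (c110r) * (c111i)) := by
    rw [hq0, hq1, hu00r, hu00i, hu01r, hu01i, hu10r, hu10i, hu11r, hu11i, hv00r, hv00i, hv01r, hv01i, hv10r, hv10i, hv11r, hv11i]; ring
  have had : dA0 + dA1 = (Fr ^ 2 + Fi ^ 2 + g ^ 2) * (((c000r) ^ 2 + (c000i) ^ 2 + (c001r) ^ 2 + (c001i) ^ 2 + (c010r) ^ 2 + (c010i) ^ 2 + (c011r) ^ 2 + (c011i) ^ 2) - ((c100r) ^ 2 + (c100i) ^ 2 + (c101r) ^ 2 + (c101i) ^ 2 + (c110r) ^ 2 + (c110i) ^ 2 + (c111r) ^ 2 + (c111i) ^ 2)) := by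
    rw [hdA0, hdA1, hu00r, hu00i, hu01r, hu01i, hu10r, hu10i, hu11r, hu11i, hv00r, hv00i, hv01r, hv01i, hv10r, hv10i, hv11r, hv11i]; ring
  have hap : pA0 + pA1 = (Fr ^ 2 + Fi ^ 2 + g ^ 2) * ((c000r) * (c100r) + (c000i) * (c100i) + (c001r) * (c101r) + (c001i) * (c101i) + (c010r) * (c110r) + (c010i) * (c110i) + (c011r) * (c111r) + (c011i) * (c111i)) := by
    rw [hpA0, hpA1, hu00r, hu00i, hu01r, hu01i, hu10r, hu10i, hu11r, hu11i, hv00r, hv00i, hv01r, hv01i, hv10r, hv10i, hv11r, hv11i]; ring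
  have haq : qA0 + qA1 = (Fr ^ 2 + Fi ^ 2 + g ^ 2) * ((c000i) * (c100r) - (c000r) * (c100i) + (c001i) * (c101r) - (c001r) * (c101i) + (c010i) * (c110r) - (c010r) * (c110i) + (c011i) * (c111r) - (c011r) * (c111i)) := by
    rw [hqA0, hqA1, hu00r, hu00i, hu01r, hu01i, hu10r, hu10i, hu11r, hu11i, hv00r, hv00i, hv01r, hv01i, hv10r, hv10i, hv11r, hv11i]; ring
  have hmsum : m0 + m1 = Fr ^ 2 + Fi ^ 2 + g ^ 2 := by
    have h' : m0 + m1 = (Fr ^ 2 + Fi ^ 2 + g ^ 2) * (((c000r) ^ 2 + (c000i) ^ 2 + (c001r) ^ 2 + (c001i) ^ 2 + (c100r) ^ 2 + (c100i) ^ 2 + (c101r) ^ 2 + (c101i) ^ 2) + ((c010r) ^ 2 + (c010i) ^ 2 + (c011r) ^ 2 + (c011i) ^ 2 + (c110r) ^ 2 + (c110i) ^ 2 + (c111r) ^ 2 + (c111i) ^ 2)) := by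
      rw [hm0, hm1, hu00r, hu00i, hu01r, hu01i, hu10r, hu10i, hu11r, hu11i, hv00r, hv00i, hv01r, hv01i, hv10r, hv10i, hv11r, hv11i]; ring
    rw [hn, mul_one] at h'; exact h'
  have hm0v : m0 = (Fr ^ 2 + Fi ^ 2 + g ^ 2) * (1 + y) / 2 := hmu
  have hm1v : m1 = (Fr ^ 2 + Fi ^ 2 + g ^ 2) * (1 - y) / 2 := by linear_combination hmsum - hm0v
  have hm1nn : 0 ≤ m1 := by rw [hm1]; positivity
  have hk1m : d1 ^ 2 + (2 * p1) ^ 2 + (2 * q1) ^ 2 ≤ m1 ^ 2 := by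
    rw [hd1, hp1, hq1, hm1]
    exact lagAux v00r v00i v01r v01i v10r v10i v11r v11i
  have hk1le : k1 ≤ m1 := by
    rw [hk1]
    calc Real.sqrt (d1 ^ 2 + (2 * p1) ^ 2 + (2 * q1) ^ 2) ≤ Real.sqrt (m1 ^ 2) :=
          Real.sqrt_le_sqrt hk1m
      _ = m1 := Real.sqrt_sq hm1nn
  have hcp2 : 2 * p0 + 2 * p1 = (Fr ^ 2 + Fi ^ 2 + g ^ 2) * (2 * ((c000r) * (c001r) + (c000i) * (c001i) + (c010r) * (c011r) + (c010i) * (c011i) + (c100r) * (c101r) + (c100i) * (c101i) + (c110r) * (c111r) + (c110i) * (c111i))) := by linear_combination 2 * hcp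
  have hcq2 : 2 * q0 + 2 * q1 = (Fr ^ 2 + Fi ^ 2 + g ^ 2) * (2 * ((c000i) * (c001r) - (c000r) * (c001i) + (c010i) * (c011r) - (c010r) * (c011i) + (c100i) * (c101r) - (c100r) * (c101i) + (c110i) * (c111r) - (c110r) * (c111i))) := by linear_combination 2 * hcq
  have hap2 : 2 * pA0 + 2 * pA1 = (Fr ^ 2 + Fi ^ 2 + g ^ 2) * (2 * ((c000r) * (c100r) + (c000i) * (c100i) + (c001r) * (c101r) + (c001i) * (c101i) + (c010r) * (c110r) + (c010i) * (c110i) + (c011r) * (c111r) + (c011i) * (c111i))) := by linear_combination 2 * hap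
  have haq2 : 2 * qA0 + 2 * qA1 = (Fr ^ 2 + Fi ^ 2 + g ^ 2) * (2 * ((c000i) * (c100r) - (c000r) * (c100i) + (c001i) * (c101r) - (c001r) * (c101i) + (c010i) * (c110r) - (c010r) * (c110i) + (c011i) * (c111r) - (c011r) * (c111i))) := by linear_combination 2 * haq
  have hz : (Fr ^ 2 + Fi ^ 2 + g ^ 2) * Real.sqrt ((((c000r) ^ 2 + (c000i) ^ 2 + (c010r) ^ 2 + (c010i) ^ 2 + (c100r) ^ 2 + (c100i) ^ 2 + (c110r) ^ 2 + (c110i) ^ 2) - ((c001r) ^ 2 + (c001i) ^ 2 + (c011r) ^ 2 + (c011i) ^ 2 + (c101r) ^ 2 + (c101i) ^ 2 + (c111r) ^ 2 + (c111i) ^ 2)) ^ 2 + (2 * ((c000r) * (c001r) + (c000i) * (c001i) + (c010r) * (c011r) + (c010i) * (c011i) + (c100r) * (c101r) + (c100i) * (c101i) + (c110r) * (c111r) + (c110i) * (c111i))) ^ 2 + (2 * ((c000i) * (c001r) - (c000r) * (c001i) + (c010i) * (c011r) - (c010r) * (c011i) + (c100i) * (c101r) - (c100r) * (c101i) + (c110i)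 * (c111r) - (c110r) * (c111i))) ^ 2) ≤ k0 + k1 := by
    rw [normScale (Fr ^ 2 + Fi ^ 2 + g ^ 2) (((c000r) ^ 2 + (c000i) ^ 2 + (c010r) ^ 2 + (c010i) ^ 2 + (c100r) ^ 2 + (c100i) ^ 2 + (c110r) ^ 2 + (c110i) ^ 2) - ((c001r) ^ 2 + (c001i) ^ 2 + (c011r) ^ 2 + (c011i) ^ 2 + (c101r) ^ 2 + (c101i) ^ 2 + (c111r) ^ 2 + (c111i) ^ 2)) (2 * ((c000r) * (c001r) + (c000i) * (c001i) + (c010r) * (c011r) + (c010i) * (c011i) + (c100r) * (c101r) + (c100i) * (c101i) + (c110r) * (c111r) + (c110i) * (c111i))) (2 * ((c000i) * (c001r) - (c000r) * (c001i) + (c010i) * (c011r) - (c010r) * (c011i) + (c100i) * (c101r) - (c100r) * (c101i) + (c110i) * (c111r) - (c110r) * (c111i))) hN.le, ← hcd, ← hcp2, ← hcq2, hk0, hk1]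
    exact tri3 d0 (2 * p0) (2 * q0) d1 (2 * p1) (2 * q1)
  have hx : k0 ≤ (Fr ^ 2 + Fi ^ 2 + g ^ 2) * Real.sqrt ((((c000r) ^ 2 + (c000i) ^ 2 + (c001r) ^ 2 + (c001i) ^ 2 + (c010r) ^ 2 + (c010i) ^ 2 + (c011r) ^ 2 + (c011i) ^ 2) - ((c100r) ^ 2 + (c100i) ^ 2 + (c101r) ^ 2 + (c101i) ^ 2 + (c110r) ^ 2 + (c110i) ^ 2 + (c111r) ^ 2 + (c111i) ^ 2)) ^ 2 + (2 * ((c000r) * (c100r) + (c000i) * (c100i) + (c001r) * (c101r) + (c001i) * (c101i) + (c010r) * (c110r) + (c010i) * (c110i) + (c011r) * (c111r) + (c011i) * (c111i))) ^ 2 + (2 * ((c000i) * (c100r) - (c000r) * (c100i) + (c001i) * (c101r) - (c001r) * (c101i) + (c010i) * (c110r) - (c010r) * (c110i) + (c011i) * (c111r) - (c011r) * (c111i))) ^ 2) + k1 := by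
    rw [normScale (Fr ^ 2 + Fi ^ 2 + g ^ 2) (((c000r) ^ 2 + (c000i) ^ 2 + (c001r) ^ 2 + (c001i) ^ 2 + (c010r) ^ 2 + (c010i) ^ 2 + (c011r) ^ 2 + (c011i) ^ 2) - ((c100r) ^ 2 + (c100i) ^ 2 + (c101r) ^ 2 + (c101i) ^ 2 + (c110r) ^ 2 + (c110i) ^ 2 + (c111r) ^ 2 + (c111i) ^ 2)) (2 * ((c000r) * (c100r) + (c000i) * (c100i) + (c001r) * (c101r) + (c001i) * (c101i) + (c010r) * (c110r) + (c010i) * (c110i) + (c011r) * (c111r) + (c011i) * (c111i))) (2 * ((c000i) * (c100r) - (c000r) * (c100i) + (c001i) * (c101r) - (c001r) * (c101i) + (c010i) * (c110r) - (c010r) * (c110i) + (c011i) * (c111r) - (c011r) * (c111i))) hN.le, ← had, ← hap2, ← haq2, hk0, hk1]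
    calc Real.sqrt (d0 ^ 2 + (2 * p0) ^ 2 + (2 * q0) ^ 2)
        = Real.sqrt (dA0 ^ 2 + (2 * pA0) ^ 2 + (2 * qA0) ^ 2) := by rw [hgap0]
      _ ≤ Real.sqrt ((dA0 + dA1) ^ 2 + (2 * pA0 + 2 * pA1) ^ 2 + (2 * qA0 + 2 * qA1) ^ 2) +
            Real.sqrt (dA1 ^ 2 + (2 * pA1) ^ 2 + (2 * qA1) ^ 2) :=
          tri3' dA0 (2 * pA0) (2 * qA0) dA1 (2 * pA1) (2 * qA1)
      _ = Real.sqrt ((dA0 + dA1) ^ 2 + (2 * pA0 + 2 * pA1) ^ 2 + (2 * qA0 + 2 * qA1) ^ 2) +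
            Real.sqrt (d1 ^ 2 + (2 * p1) ^ 2 + (2 * q1) ^ 2) := by rw [hgap1]
  have hfin : (Fr ^ 2 + Fi ^ 2 + g ^ 2) * (y + Real.sqrt ((((c000r) ^ 2 + (c000i) ^ 2 + (c010r) ^ 2 + (c010i) ^ 2 + (c100r) ^ 2 + (c100i) ^ 2 + (c110r) ^ 2 + (c110i) ^ 2) - ((c001r) ^ 2 + (c001i) ^ 2 + (c011r) ^ 2 + (c011i) ^ 2 + (c101r) ^ 2 + (c101i) ^ 2 + (c111r) ^ 2 + (c111i) ^ 2)) ^ 2 + (2 * ((c000r) * (c001r) + (c000i) * (c001i) + (c010r) * (c011r) + (c010i) * (c011i) + (c100r) * (c101r) + (c100i) * (c101i) + (c110r) * (c111r) + (c110i) * (c111i))) ^ 2 + (2 * ((c000i) * (c001r) - (c000r) * (c001i) + (c010i) * (c011r) - (c010r) * (c011i) + (c100i) * (c101r) - (c100r) * (c101i) + (c110i) * (c111r) - (c110r) * (c111i))) ^ 2)) ≤ (Fr ^ 2 + Fi ^ 2 + g ^ 2) * (1 + Real.sqrt ((((c000r) ^ 2 + (c000i) ^ 2 + (c001r) ^ 2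 + (c001i) ^ 2 + (c010r) ^ 2 + (c010i) ^ 2 + (c011r) ^ 2 + (c011i) ^ 2) - ((c100r) ^ 2 + (c100i) ^ 2 + (c101r) ^ 2 + (c101i) ^ 2 + (c110r) ^ 2 + (c110i) ^ 2 + (c111r) ^ 2 + (c111i) ^ 2)) ^ 2 + (2 * ((c000r) * (c100r) + (c000i) * (c100i) + (c001r) * (c101r) + (c001i) * (c101i) + (c010r) * (c110r) + (c010i) * (c110i) + (c011r) * (c111r) + (c011i) * (c111i))) ^ 2 + (2 * ((c000i) * (c100r) - (c000r) * (c100i) + (c001i) * (c101r) - (c001r) * (c101i) + (c010i) * (c110r) - (c010r) * (c110i) + (c011i) * (c111r) - (c011r) * (c111i))) ^ 2)) := by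
    linarith only [hz, hx, hk1le, hm1v, hmsum]
  exact le_of_mul_le_mul_left hfin hN

private theorem qmain (c000r c000i c001r c001i c010r c010i c011r c011i c100r c100i c101r c101i c110r c110i c111r c111i : ℝ)
    (hn : ((c000r) ^ 2 + (c000i) ^ 2 + (c001r) ^ 2 + (c001i) ^ 2 + (c100r) ^ 2 + (c100i) ^ 2 + (c101r) ^ 2 + (c101i) ^ 2) + ((c010r) ^ 2 + (c010i) ^ 2 + (c011r) ^ 2 + (c011i) ^ 2 + (c110r) ^ 2 + (c110i) ^ 2 + (c111r) ^ 2 + (c111i) ^ 2) = 1) :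
    Real.sqrt ((((c000r) ^ 2 + (c000i) ^ 2 + (c001r) ^ 2 + (c001i) ^ 2 + (c100r) ^ 2 + (c100i) ^ 2 + (c101r) ^ 2 + (c101i) ^ 2) - ((c010r) ^ 2 + (c010i) ^ 2 + (c011r) ^ 2 + (c011i) ^ 2 + (c110r) ^ 2 + (c110i) ^ 2 + (c111r) ^ 2 + (c111i) ^ 2)) ^ 2 + (2 * ((c000r) * (c010r) + (c000i) * (c010i) + (c001r) * (c011r) + (c001i) * (c011i) + (c100r) * (c110r) + (c100i) * (c110i) + (c101r) * (c111r) + (c101i) * (c111i))) ^ 2 + (2 * ((c000i) * (c010r) - (c000r) * (c010i) + (c001i) * (c011r) - (c001r) * (c011i) + (c100i) * (c110r) - (c100r) * (c110i) + (c101i) * (c111r) - (c101r) * (c111i))) ^ 2) + Real.sqrt ((((c000r) ^ 2 + (c000i) ^ 2 + (c010r) ^ 2 + (c010i) ^ 2 + (c100r) ^ 2 + (c100i) ^ 2 + (c110r) ^ 2 + (c110i) ^ 2) - ((c001r) ^ 2 + (c001i) ^ 2 + (c011r) ^ 2 + (c011i) ^ 2 + (c101r) ^ 2 + (c101i) ^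 2 + (c111r) ^ 2 + (c111i) ^ 2)) ^ 2 + (2 * ((c000r) * (c001r) + (c000i) * (c001i) + (c010r) * (c011r) + (c010i) * (c011i) + (c100r) * (c101r) + (c100i) * (c101i) + (c110r) * (c111r) + (c110i) * (c111i))) ^ 2 + (2 * ((c000i) * (c001r) - (c000r) * (c001i) + (c010i) * (c011r) - (c010r) * (c011i) + (c100i) * (c101r) - (c100r) * (c101i) + (c110i) * (c111r) - (c110r) * (c111i))) ^ 2) ≤ 1 + Real.sqrt ((((c000r) ^ 2 + (c000i) ^ 2 + (c001r) ^ 2 + (c001i) ^ 2 + (c010r) ^ 2 + (c010i) ^ 2 + (c011r) ^ 2 + (c011i) ^ 2) - ((c100r) ^ 2 + (c100i) ^ 2 + (c101r) ^ 2 + (c101i) ^ 2 + (c110r) ^ 2 + (c110i) ^ 2 + (c111r) ^ 2 + (c111i) ^ 2)) ^ 2 + (2 * ((c000r) * (c100r) + (c000i) * (c100i) + (c001r) * (c101r) + (c001i) * (c101i) + (c010r) * (c110r) + (c010i) * (c110i) + (c011r) * (c111r) + (c011i) * (c111i))) ^ 2 + (2 * ((c000i) * (c100r) - (c000r) * (c100i)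 + (c001i) * (c101r) - (c001r) * (c101i) + (c010i) * (c110r) - (c010r) * (c110i) + (c011i) * (c111r) - (c011r) * (c111i))) ^ 2) := by
  set eb := (c000r) ^ 2 + (c000i) ^ 2 + (c001r) ^ 2 + (c001i) ^ 2 + (c100r) ^ 2 + (c100i) ^ 2 + (c101r) ^ 2 + (c101i) ^ 2 with heb
  set hb := (c010r) ^ 2 + (c010i) ^ 2 + (c011r) ^ 2 + (c011i) ^ 2 + (c110r) ^ 2 + (c110i) ^ 2 + (c111r) ^ 2 + (c111i) ^ 2 with hhb
  set fbr := (c000r) * (c010r) + (c000i) * (c010i) + (c001r) * (c011r) + (c001i) * (c011i) + (c100r) * (c110r) + (c100i) * (c110i) + (c101r) * (c111r) + (c101i) * (c111i) with hfbr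
  set fbi := (c000i) * (c010r) - (c000r) * (c010i) + (c001i) * (c011r) - (c001r) * (c011i) + (c100i) * (c110r) - (c100r) * (c110i) + (c101i) * (c111r) - (c101r) * (c111i) with hfbi
  set y := Real.sqrt ((eb - hb) ^ 2 + (2 * fbr) ^ 2 + (2 * fbi) ^ 2) with hy0
  have hy : 0 ≤ y := by rw [hy0]; exact Real.sqrt_nonneg _
  have harg : (0:ℝ) ≤ (eb - hb) ^ 2 + (2 * fbr) ^ 2 + (2 * fbi) ^ 2 := by positivity
  have hy2 : y ^ 2 = (eb - hb) ^ 2 + (2 * fbr) ^ 2 + (2 * fbi) ^ 2 := by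
    rw [hy0]; exact Real.sq_sqrt harg
  have hn' := hn
  rw [heb, hhb] at hn'
  clear_value eb hb fbr fbi y
  by_cases hdeg : fbr = 0 ∧ fbi = 0 ∧ hb ≤ eb
  · have harg2 : (eb - hb) ^ 2 + (2 * (0:ℝ)) ^ 2 + (2 * (0:ℝ)) ^ 2 = (eb - hb) ^ 2 := by ring
    have hyeq : y = eb - hb := by
      rw [hy0, hdeg.1, hdeg.2.1, harg2]
      exact Real.sqrt_sq (by linarith only [hdeg.2.2])
    refine qcore c000r c000i c001r c001i c010r c010i c011r c011i c100r c100i c101r c101i c110r c110i c111r c111i 1 0 0 y hn' hy (by norm_num) ?_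
    linear_combination hn / 2 - heb - hyeq / 2
  · set g := (hb - eb + y) / 2 with hgdef
    clear_value g
    have hylb : eb - hb ≤ y := ylbAux hb eb y fbr fbi hy (by linear_combination hy2)
    have hgnn : 0 ≤ g := by rw [hgdef]; linarith only [hylb]
    have hN : 0 < fbr ^ 2 + fbi ^ 2 + g ^ 2 := by
      by_contra hc
      push_neg at hc
      obtain ⟨f1, f2, f3⟩ := sq3Aux fbr fbi g hc
      have h4 : (hb - eb + y) / 2 = 0 := by rw [← hgdef]; exact f3
      exact hdeg ⟨f1, f2, by linarith only [hy, h4]⟩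
    have hkey : g * (eb - hb + g) = fbr ^ 2 + fbi ^ 2 := by
      rw [hgdef]; linear_combination hy2 / 4
    refine qcore c000r c000i c001r c001i c010r c010i c011r c011i c100r c100i c101r c101i c110r c110i c111r c111i fbr fbi g y hn' hy hN ?_
    have hbig : (fbr * c000r + fbi * c000i + g * c010r) ^ 2 + (fbr * c000i - fbi * c000r + g * c010i) ^ 2 + (fbr * c001r + fbi * c001i + g * c011r) ^ 2 + (fbr * c001i - fbi * c001r + g * c011i) ^ 2 + (fbr * c100r + fbi * c100i + g * c110r) ^ 2 + (fbr * c100i - fbi * c100r + g * c110i) ^ 2 + (fbr * c101r + fbi * c101i + g * c111r) ^ 2 + (fbr * c101i - fbi * c101r + g * c111i) ^ 2 = (fbr ^ 2 + fbi ^ 2) * eb + 2 * g * (fbr ^ 2 + fbi ^ 2) + g ^ 2 * hb := by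
      rw [heb, hhb, hfbr, hfbi]; ring
    rw [hbig]
    linear_combination ((1/2) + (-1) * g + (-1/2) * hb + (-1/2) * eb) * hkey + ((1) * g ^ 2 + (-1/2) * hb * g + (1/2) * eb * g) * hn + ((1) * g ^ 2 + (1) * fbi ^ 2 + (1) * fbr ^ 2) * hgdef

/-- the three bi-separable ergotropic gaps of a generic three-qubit
pure state satisfy the triangle (entanglement polygon) inequalities. -/
theorem stmt_13 (l0 l1 l2 l3 l4 φ : ℝ)
    (h0 : 0 ≤ l0) (h1 : 0 ≤ l1) (h2 : 0 ≤ l2) (h3 : 0 ≤ l3) (h4 : 0 ≤ l4)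
    (hsum : l0 ^ 2 + l1 ^ 2 + l2 ^ 2 + l3 ^ 2 + l4 ^ 2 = 1) :
    let α : ℝ := ‖(l1 : ℂ) * (l4 : ℂ) * Complex.exp ((φ : ℂ) * Complex.I)
        - (l2 : ℂ) * (l3 : ℂ)‖ ^ 2
    let ΔA : ℝ := 1 - Real.sqrt (1 - 4 * l0 ^ 2 * (1 - (l0 ^ 2 + l1 ^ 2)))
    let ΔB : ℝ := 1 - Real.sqrt (1 - 4 * (l0 ^ 2 * (l3 ^ 2 + l4 ^ 2) + α))
    let ΔC : ℝ := 1 - Real.sqrt (1 - 4 * (l0 ^ 2 * (l2 ^ 2 + l4 ^ 2) + α))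
    ΔA ≤ ΔB + ΔC ∧ ΔB ≤ ΔC + ΔA ∧ ΔC ≤ ΔA + ΔB := by
  have hpyth : Real.sin φ ^ 2 + Real.cos φ ^ 2 = 1 := Real.sin_sq_add_cos_sq φ
  have habs : ‖(l1 : ℂ) * (l4 : ℂ) * Complex.exp ((φ : ℂ) * Complex.I) - (l2 : ℂ) * (l3 : ℂ)‖ ^ 2 = (l1 * l4 * Real.cos φ - l2 * l3) ^ 2 + (l1 * l4 * Real.sin φ) ^ 2 := by
    rw [Complex.sq_norm]
    have hz : (l1 : ℂ) * (l4 : ℂ) * Complex.exp ((φ : ℂ) * Complex.I) - (l2 : ℂ) * (l3 : ℂ)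
        = Complex.ofReal (l1 * l4 * Real.cos φ - l2 * l3) + Complex.ofReal (l1 * l4 * Real.sin φ) * Complex.I := by
      rw [Complex.exp_mul_I, ← Complex.ofReal_cos, ← Complex.ofReal_sin]
      push_cast
      ring
    rw [hz, Complex.normSq_add_mul_I]
  have hn1 : ((l0) ^ 2 + (0) ^ 2 + (0) ^ 2 + (0) ^ 2 + (l1 * Real.cos φ) ^ 2 + (l1 * Real.sin φ) ^ 2 + (l2) ^ 2 + (0) ^ 2) + ((0) ^ 2 + (0) ^ 2 + (0) ^ 2 + (0) ^ 2 + (l3) ^ 2 + (0) ^ 2 + (l4) ^ 2 + (0) ^ 2) = 1 := by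
    linear_combination ((1)) * hsum + ((1) * l1 ^ 2) * hpyth
  have I1 := qmain l0 0 0 0 0 0 0 0 (l1 * Real.cos φ) (l1 * Real.sin φ) l2 0 l3 0 l4 0 hn1
  have e1B : (((l0) ^ 2 + (0) ^ 2 + (0) ^ 2 + (0) ^ 2 + (l1 * Real.cos φ) ^ 2 + (l1 * Real.sin φ) ^ 2 + (l2) ^ 2 + (0) ^ 2) - ((0) ^ 2 + (0) ^ 2 + (0) ^ 2 + (0) ^ 2 + (l3) ^ 2 + (0) ^ 2 + (l4) ^ 2 + (0) ^ 2)) ^ 2 + (2 * ((l0) * (0) + (0) * (0) + (0) * (0) + (0) * (0) + (l1 * Real.cos φ) * (l3) + (l1 * Real.sin φ) * (0) + (l2) * (l4) + (0) * (0))) ^ 2 + (2 * ((0) * (0) - (l0) * (0) + (0) * (0) - (0) * (0) + (l1 * Real.sin φ) * (l3) - (l1 * Real.cos φ) * (0) + (0) * (l4) - (l2) * (0))) ^ 2 = 1 - 4 * (l0 ^ 2 * (l3 ^ 2 + l4 ^ 2) + ‖(l1 : ℂ) * (l4 : ℂ) * Complex.exp ((φ : ℂ) * Complex.I) - (l2 :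 ℂ) * (l3 : ℂ)‖ ^ 2) := by
    rw [habs]
    linear_combination ((1) + (1) * l4 ^ 2 + (1) * l3 ^ 2 + (1) * l2 ^ 2 + (1) * l1 ^ 2 + (1) * l0 ^ 2) * hsum + ((2) * l1 ^ 2 * l4 ^ 2 + (2) * l1 ^ 2 * l3 ^ 2 + (2) * l1 ^ 2 * l2 ^ 2 + (1) * l1 ^ 4 + (1) * l1 ^ 4 * Real.sin φ ^ 2 + (1) * l1 ^ 4 * Real.cos φ ^ 2 + (2) * l0 ^ 2 * l1 ^ 2) * hpyth
  have e1C : (((l0) ^ 2 + (0) ^ 2 + (0) ^ 2 + (0) ^ 2 + (l1 * Real.cos φ) ^ 2 + (l1 * Real.sin φ) ^ 2 + (l3) ^ 2 + (0) ^ 2) - ((0) ^ 2 + (0) ^ 2 + (0) ^ 2 + (0) ^ 2 + (l2) ^ 2 + (0) ^ 2 + (l4) ^ 2 + (0) ^ 2)) ^ 2 + (2 * ((l0) * (0) + (0) * (0) + (0) * (0) + (0) * (0) + (l1 * Real.cos φ) * (l2) + (l1 * Real.sin φ) * (0) + (l3) * (l4) + (0) * (0))) ^ 2 + (2 * ((0)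 * (0) - (l0) * (0) + (0) * (0) - (0) * (0) + (l1 * Real.sin φ) * (l2) - (l1 * Real.cos φ) * (0) + (0) * (l4) - (l3) * (0))) ^ 2 = 1 - 4 * (l0 ^ 2 * (l2 ^ 2 + l4 ^ 2) + ‖(l1 : ℂ) * (l4 : ℂ) * Complex.exp ((φ : ℂ) * Complex.I) - (l2 : ℂ) * (l3 : ℂ)‖ ^ 2) := by
    rw [habs]
    linear_combination ((1) + (1) * l4 ^ 2 + (1) * l3 ^ 2 + (1) * l2 ^ 2 + (1) * l1 ^ 2 + (1) * l0 ^ 2) * hsum + ((2) * l1 ^ 2 * l4 ^ 2 + (2) * l1 ^ 2 * l3 ^ 2 + (2) * l1 ^ 2 * l2 ^ 2 + (1) * l1 ^ 4 + (1) * l1 ^ 4 * Real.sin φ ^ 2 + (1) * l1 ^ 4 * Real.cos φ ^ 2 + (2) * l0 ^ 2 * l1 ^ 2) * hpyth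
  have e1A : (((l0) ^ 2 + (0) ^ 2 + (0) ^ 2 + (0) ^ 2 + (0) ^ 2 + (0) ^ 2 + (0) ^ 2 + (0) ^ 2) - ((l1 * Real.cos φ) ^ 2 + (l1 * Real.sin φ) ^ 2 + (l2) ^ 2 + (0) ^ 2 + (l3) ^ 2 + (0) ^ 2 + (l4) ^ 2 + (0) ^ 2)) ^ 2 + (2 * ((l0) * (l1 * Real.cos φ) + (0) * (l1 * Real.sin φ) + (0) * (l2) + (0) * (0) + (0) * (l3) + (0) * (0) + (0) * (l4) + (0) * (0))) ^ 2 + (2 * ((0) * (l1 * Real.cos φ) - (l0) * (l1 * Real.sin φ) + (0) * (l2) - (0) * (0) + (0) * (l3) - (0) * (0) + (0) * (l4) - (0) * (0))) ^ 2 = 1 - 4 * l0 ^ 2 * (1 - (l0 ^ 2 + l1 ^ 2)) := by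
    linear_combination ((1) + (1) * l4 ^ 2 + (1) * l3 ^ 2 + (1) * l2 ^ 2 + (1) * l1 ^ 2 + (-3) * l0 ^ 2) * hsum + ((2) * l1 ^ 2 * l4 ^ 2 + (2) * l1 ^ 2 * l3 ^ 2 + (2) * l1 ^ 2 * l2 ^ 2 + (1) * l1 ^ 4 + (1) * l1 ^ 4 * Real.sin φ ^ 2 + (1) * l1 ^ 4 * Real.cos φ ^ 2 + (2) * l0 ^ 2 * l1 ^ 2) * hpyth
  rw [e1B, e1C, e1A] at I1
  have hn2 : ((l0) ^ 2 + (0) ^ 2 + (0) ^ 2 + (0) ^ 2 + (0) ^ 2 + (0) ^ 2 + (0) ^ 2 + (0) ^ 2) + ((l1 * Real.cos φ) ^ 2 + (l1 * Real.sin φ) ^ 2 + (l2) ^ 2 + (0) ^ 2 + (l3) ^ 2 + (0) ^ 2 + (l4) ^ 2 + (0) ^ 2) = 1 := by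
    linear_combination ((1)) * hsum + ((1) * l1 ^ 2) * hpyth
  have I2 := qmain l0 0 0 0 (l1 * Real.cos φ) (l1 * Real.sin φ) l2 0 0 0 0 0 l3 0 l4 0 hn2
  have e2B : (((l0) ^ 2 + (0) ^ 2 + (0) ^ 2 + (0) ^ 2 + (0) ^ 2 + (0) ^ 2 + (0) ^ 2 + (0) ^ 2) - ((l1 * Real.cos φ) ^ 2 + (l1 * Real.sin φ) ^ 2 + (l2) ^ 2 + (0) ^ 2 + (l3) ^ 2 + (0) ^ 2 + (l4) ^ 2 + (0) ^ 2)) ^ 2 + (2 * ((l0) * (l1 * Real.cos φ) + (0) * (l1 * Real.sin φ) + (0) * (l2) + (0) * (0) + (0) * (l3) + (0) * (0) + (0) * (l4) + (0) * (0))) ^ 2 + (2 * ((0) * (l1 * Real.cos φ) - (l0) * (l1 * Real.sin φ) + (0) * (l2) - (0) * (0) + (0) * (l3) - (0) * (0) + (0) * (l4) - (0) * (0))) ^ 2 = 1 - 4 * l0 ^ 2 * (1 - (l0 ^ 2 + l1 ^ 2)) := by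
    linear_combination ((1) + (1) * l4 ^ 2 + (1) * l3 ^ 2 + (1) * l2 ^ 2 + (1) * l1 ^ 2 + (-3) * l0 ^ 2) * hsum + ((2) * l1 ^ 2 * l4 ^ 2 + (2) * l1 ^ 2 * l3 ^ 2 + (2) * l1 ^ 2 * l2 ^ 2 + (1) * l1 ^ 4 + (1) * l1 ^ 4 * Real.sin φ ^ 2 + (1) * l1 ^ 4 * Real.cos φ ^ 2 + (2) * l0 ^ 2 * l1 ^ 2) * hpyth
  have e2C : (((l0) ^ 2 + (0) ^ 2 + (l1 * Real.cos φ) ^ 2 + (l1 * Real.sin φ) ^ 2 + (0) ^ 2 + (0) ^ 2 + (l3) ^ 2 + (0) ^ 2) - ((0) ^ 2 + (0) ^ 2 + (l2) ^ 2 + (0) ^ 2 + (0) ^ 2 + (0) ^ 2 + (l4) ^ 2 + (0) ^ 2)) ^ 2 + (2 * ((l0) * (0) + (0) * (0) + (l1 * Real.cos φ) * (l2) + (l1 * Real.sin φ) * (0) + (0) * (0) + (0) * (0) + (l3) * (l4) + (0) * (0))) ^ 2 + (2 * ((0) * (0) - (l0) * (0) + (l1 * Real.sin φ) * (l2) - (l1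 * Real.cos φ) * (0) + (0) * (0) - (0) * (0) + (0) * (l4) - (l3) * (0))) ^ 2 = 1 - 4 * (l0 ^ 2 * (l2 ^ 2 + l4 ^ 2) + ‖(l1 : ℂ) * (l4 : ℂ) * Complex.exp ((φ : ℂ) * Complex.I) - (l2 : ℂ) * (l3 : ℂ)‖ ^ 2) := by
    rw [habs]
    linear_combination ((1) + (1) * l4 ^ 2 + (1) * l3 ^ 2 + (1) * l2 ^ 2 + (1) * l1 ^ 2 + (1) * l0 ^ 2) * hsum + ((2) * l1 ^ 2 * l4 ^ 2 + (2) * l1 ^ 2 * l3 ^ 2 + (2) * l1 ^ 2 * l2 ^ 2 + (1) * l1 ^ 4 + (1) * l1 ^ 4 * Real.sin φ ^ 2 + (1) * l1 ^ 4 * Real.cos φ ^ 2 + (2) * l0 ^ 2 * l1 ^ 2) * hpyth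
  have e2A : (((l0) ^ 2 + (0) ^ 2 + (0) ^ 2 + (0) ^ 2 + (l1 * Real.cos φ) ^ 2 + (l1 * Real.sin φ) ^ 2 + (l2) ^ 2 + (0) ^ 2) - ((0) ^ 2 + (0) ^ 2 + (0) ^ 2 + (0) ^ 2 + (l3) ^ 2 + (0) ^ 2 + (l4) ^ 2 + (0) ^ 2)) ^ 2 + (2 * ((l0) * (0) + (0) * (0) + (0) * (0) + (0) * (0) + (l1 * Real.cos φ) * (l3) + (l1 * Real.sin φ) * (0) + (l2) * (l4) + (0) * (0))) ^ 2 + (2 * ((0) * (0) - (l0) * (0) + (0) * (0) - (0) * (0) + (l1 * Real.sin φ) * (l3) - (l1 * Real.cos φ) * (0) + (0) * (l4) - (l2) * (0))) ^ 2 = 1 - 4 * (l0 ^ 2 * (l3 ^ 2 + l4 ^ 2) + ‖(l1 : ℂ) * (l4 : ℂ) * Complex.exp ((φ : ℂ) * Complex.I) - (l2 : ℂ) * (l3 : ℂ)‖ ^ 2) := by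
    rw [habs]
    linear_combination ((1) + (1) * l4 ^ 2 + (1) * l3 ^ 2 + (1) * l2 ^ 2 + (1) * l1 ^ 2 + (1) * l0 ^ 2) * hsum + ((2) * l1 ^ 2 * l4 ^ 2 + (2) * l1 ^ 2 * l3 ^ 2 + (2) * l1 ^ 2 * l2 ^ 2 + (1) * l1 ^ 4 + (1) * l1 ^ 4 * Real.sin φ ^ 2 + (1) * l1 ^ 4 * Real.cos φ ^ 2 + (2) * l0 ^ 2 * l1 ^ 2) * hpyth
  rw [e2B, e2C, e2A] at I2
  have hn3 : ((l0) ^ 2 + (0) ^ 2 + (l1 * Real.cos φ) ^ 2 + (l1 * Real.sin φ) ^ 2 + (0) ^ 2 + (0) ^ 2 + (l2) ^ 2 + (0) ^ 2) + ((0) ^ 2 + (0) ^ 2 + (l3) ^ 2 + (0) ^ 2 + (0) ^ 2 + (0) ^ 2 + (l4) ^ 2 + (0) ^ 2) = 1 := by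
    linear_combination ((1)) * hsum + ((1) * l1 ^ 2) * hpyth
  have I3 := qmain l0 0 (l1 * Real.cos φ) (l1 * Real.sin φ) 0 0 l3 0 0 0 l2 0 0 0 l4 0 hn3
  have e3B : (((l0) ^ 2 + (0) ^ 2 + (l1 * Real.cos φ) ^ 2 + (l1 * Real.sin φ) ^ 2 + (0) ^ 2 + (0) ^ 2 + (l2) ^ 2 + (0) ^ 2) - ((0) ^ 2 + (0) ^ 2 + (l3) ^ 2 + (0) ^ 2 + (0) ^ 2 + (0) ^ 2 + (l4) ^ 2 + (0) ^ 2)) ^ 2 + (2 * ((l0) * (0) + (0) * (0) + (l1 * Real.cos φ) * (l3) + (l1 * Real.sin φ) * (0) + (0) * (0) + (0) * (0) + (l2) * (l4) + (0) * (0))) ^ 2 + (2 * ((0) * (0) - (l0) * (0) + (l1 * Real.sin φ) * (l3) - (l1 * Real.cos φ) * (0) + (0) * (0) - (0) * (0) + (0) * (l4) - (l2) * (0))) ^ 2 = 1 - 4 * (l0 ^ 2 * (l3 ^ 2 + l4 ^ 2) + ‖(l1 : ℂ) * (l4 : ℂ) * Complex.exp ((φ : ℂ) * Complex.I) - (l2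 : ℂ) * (l3 : ℂ)‖ ^ 2) := by
    rw [habs]
    linear_combination ((1) + (1) * l4 ^ 2 + (1) * l3 ^ 2 + (1) * l2 ^ 2 + (1) * l1 ^ 2 + (1) * l0 ^ 2) * hsum + ((2) * l1 ^ 2 * l4 ^ 2 + (2) * l1 ^ 2 * l3 ^ 2 + (2) * l1 ^ 2 * l2 ^ 2 + (1) * l1 ^ 4 + (1) * l1 ^ 4 * Real.sin φ ^ 2 + (1) * l1 ^ 4 * Real.cos φ ^ 2 + (2) * l0 ^ 2 * l1 ^ 2) * hpyth
  have e3C : (((l0) ^ 2 + (0) ^ 2 + (0) ^ 2 + (0) ^ 2 + (0) ^ 2 + (0) ^ 2 + (0) ^ 2 + (0) ^ 2) - ((l1 * Real.cos φ) ^ 2 + (l1 * Real.sin φ) ^ 2 + (l3) ^ 2 + (0) ^ 2 + (l2) ^ 2 + (0) ^ 2 + (l4) ^ 2 + (0) ^ 2)) ^ 2 + (2 * ((l0) * (l1 * Real.cos φ) + (0) * (l1 * Real.sin φ) + (0) * (l3) + (0) * (0) + (0) * (l2) + (0) * (0) + (0) * (l4) + (0) * (0))) ^ 2 + (2 * ((0)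 * (l1 * Real.cos φ) - (l0) * (l1 * Real.sin φ) + (0) * (l3) - (0) * (0) + (0) * (l2) - (0) * (0) + (0) * (l4) - (0) * (0))) ^ 2 = 1 - 4 * l0 ^ 2 * (1 - (l0 ^ 2 + l1 ^ 2)) := by
    linear_combination ((1) + (1) * l4 ^ 2 + (1) * l3 ^ 2 + (1) * l2 ^ 2 + (1) * l1 ^ 2 + (-3) * l0 ^ 2) * hsum + ((2) * l1 ^ 2 * l4 ^ 2 + (2) * l1 ^ 2 * l3 ^ 2 + (2) * l1 ^ 2 * l2 ^ 2 + (1) * l1 ^ 4 + (1) * l1 ^ 4 * Real.sin φ ^ 2 + (1) * l1 ^ 4 * Real.cos φ ^ 2 + (2) * l0 ^ 2 * l1 ^ 2) * hpyth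
  have e3A : (((l0) ^ 2 + (0) ^ 2 + (l1 * Real.cos φ) ^ 2 + (l1 * Real.sin φ) ^ 2 + (0) ^ 2 + (0) ^ 2 + (l3) ^ 2 + (0) ^ 2) - ((0) ^ 2 + (0) ^ 2 + (l2) ^ 2 + (0) ^ 2 + (0) ^ 2 + (0) ^ 2 + (l4) ^ 2 + (0) ^ 2)) ^ 2 + (2 * ((l0) * (0) + (0) * (0) + (l1 * Real.cos φ) * (l2) + (l1 * Real.sin φ) * (0) + (0) * (0) + (0) * (0) + (l3) * (l4) + (0) * (0))) ^ 2 + (2 * ((0) * (0) - (l0) * (0) + (l1 * Real.sin φ) * (l2) - (l1 * Real.cos φ) * (0) + (0) * (0) - (0) * (0) + (0) * (l4) - (l3) * (0))) ^ 2 = 1 - 4 * (l0 ^ 2 * (l2 ^ 2 + l4 ^ 2) + ‖(l1 : ℂ) * (l4 : ℂ) * Complex.exp ((φ : ℂ) * Complex.I) - (l2 : ℂ) * (l3 : ℂ)‖ ^ 2) := by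
    rw [habs]
    linear_combination ((1) + (1) * l4 ^ 2 + (1) * l3 ^ 2 + (1) * l2 ^ 2 + (1) * l1 ^ 2 + (1) * l0 ^ 2) * hsum + ((2) * l1 ^ 2 * l4 ^ 2 + (2) * l1 ^ 2 * l3 ^ 2 + (2) * l1 ^ 2 * l2 ^ 2 + (1) * l1 ^ 4 + (1) * l1 ^ 4 * Real.sin φ ^ 2 + (1) * l1 ^ 4 * Real.cos φ ^ 2 + (2) * l0 ^ 2 * l1 ^ 2) * hpyth
  rw [e3B, e3C, e3A] at I3
  refine ⟨by linarith [I1], by linarith [I2], by linarith [I3]⟩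
end

section
/- Let H = diag(0, 0, 1) on ℂ³ and H_glob = H ⊗ I₃ + I₃ ⊗ H on ℂ³⊗ℂ³ (a 9×9 matrix indexed by Fin 3 × Fin 3). For any α, β ∈ ℂ with |α|² + |β|² = 1 and α ≠ 0 ≠ β, the unit vector ψ = α·(e₀ ⊗ e₀) + β·(e₁ ⊗ e₁) satisfies: (i) ⟨ψ, H_glob ψ⟩ = 0 = inf over unitary U of Re Tr(U |ψ⟩⟨ψ| U† H_glob), i.e. the entangled state ψ is passive (no ergotropic work can be extracted from it); and (ii) ψ is not a product vector, i.e. there exist no u, v : Fin 3 → ℂ with ψ(i,k) = u i · v k. -/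
open Matrix Kronecker

/-- for the qutrit Hamiltonian `H = diag(0,0,1)` with degenerate
ground level, the entangled state `ψ = α·(e₀⊗e₀) + β·(e₁⊗e₁)` has zero energy,
is passive (the infimum over unitaries of `Re Tr(U|ψ⟩⟨ψ|U† H_glob)` is 0), and is
not a product vector. -/
theorem stmt_16 (α β : ℂ) (hn : ‖α‖ ^ 2 + ‖β‖ ^ 2 = 1) (hα : α ≠ 0) (hβ : β ≠ 0) :
    let H : Matrix (Fin 3) (Fin 3) ℂ := Matrix.diagonal ![0, 0, 1]
    let Hglob : Matrix (Fin 3 × Fin 3) (Fin 3 × Fin 3) ℂ :=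
      H ⊗ₖ (1 : Matrix (Fin 3) (Fin 3) ℂ) + (1 : Matrix (Fin 3) (Fin 3) ℂ) ⊗ₖ H
    let ψ : Fin 3 × Fin 3 → ℂ :=
      fun x => if x = ((0 : Fin 3), (0 : Fin 3)) then α
        else if x = ((1 : Fin 3), (1 : Fin 3)) then β else 0
    (star ψ ⬝ᵥ Hglob.mulVec ψ = 0) ∧
    (⨅ U : Matrix.unitaryGroup (Fin 3 × Fin 3) ℂ,
        (((U : Matrix (Fin 3 × Fin 3) (Fin 3 × Fin 3) ℂ) *
          (Matrix.of fun x y => ψ x * star (ψ y)) *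
          (U : Matrix (Fin 3 × Fin 3) (Fin 3 × Fin 3) ℂ)ᴴ * Hglob).trace).re) = 0 ∧
    ¬ ∃ (u v : Fin 3 → ℂ), ∀ i k, ψ (i, k) = u i * v k := by
  intro H Hglob ψ
  -- the diagonal of the global Hamiltonian
  set dC : Fin 3 × Fin 3 → ℂ :=
    fun p => ![(0:ℂ), 0, 1] p.1 + ![(0:ℂ), 0, 1] p.2 with hdC
  have hH : Hglob = Matrix.diagonal dC := by
    show H ⊗ₖ (1 : Matrix (Fin 3) (Fin 3) ℂ) + (1 : Matrix (Fin 3) (Fin 3) ℂ) ⊗ₖ H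
        = Matrix.diagonal dC
    rw [show (1 : Matrix (Fin 3) (Fin 3) ℂ) = Matrix.diagonal (fun _ => 1) by
          simp [Matrix.diagonal_one]]
    show Matrix.diagonal ![0,0,1] ⊗ₖ Matrix.diagonal (fun _ => (1:ℂ))
        + Matrix.diagonal (fun _ => (1:ℂ)) ⊗ₖ Matrix.diagonal ![0,0,1]
        = Matrix.diagonal dC
    rw [Matrix.diagonal_kronecker_diagonal, Matrix.diagonal_kronecker_diagonal,
      Matrix.diagonal_add]
    congr 1
    funext p
    simp [hdC]
  -- diagonal entries of the conjugated projector
  have hdiag : ∀ (U : Matrix (Fin 3 × Fin 3) (Fin 3 × Fin 3) ℂ) (x : Fin 3 × Fin 3),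
      (U * Matrix.of (fun x y => ψ x * star (ψ y)) * Uᴴ) x x
        = U.mulVec ψ x * star (U.mulVec ψ x) := by
    intro U x
    simp only [Matrix.mul_apply, Matrix.conjTranspose_apply, Matrix.of_apply,
      Matrix.mulVec, dotProduct, Finset.sum_mul, star_sum, star_mul', Finset.mul_sum]
    refine Finset.sum_congr rfl fun b _ => Finset.sum_congr rfl fun a _ => by ring
  -- trace against a diagonal matrix
  have htr : ∀ (A : Matrix (Fin 3 × Fin 3) (Fin 3 × Fin 3) ℂ),
      (A * Matrix.diagonal dC).trace = ∑ x, A x x * dC x := by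
    intro A
    simp [Matrix.trace, Matrix.diag, Matrix.mul_diagonal]
  have hdre : ∀ p : Fin 3 × Fin 3, 0 ≤ (dC p).re ∧ (dC p).im = 0 := by
    rintro ⟨a, b⟩
    fin_cases a <;> fin_cases b <;> norm_num [hdC]
  -- the objective function is nonnegative
  have hnonneg : ∀ U : Matrix.unitaryGroup (Fin 3 × Fin 3) ℂ,
      0 ≤ (((U : Matrix (Fin 3 × Fin 3) (Fin 3 × Fin 3) ℂ) *
          (Matrix.of fun x y => ψ x * star (ψ y)) *
          (U : Matrix (Fin 3 × Fin 3) (Fin 3 × Fin 3) ℂ)ᴴ * Hglob).trace).re := by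
    intro U
    rw [hH, htr, Complex.re_sum]
    refine Finset.sum_nonneg fun x _ => ?_
    rw [hdiag]
    have h1 : ((U : Matrix (Fin 3 × Fin 3) (Fin 3 × Fin 3) ℂ).mulVec ψ x *
        star ((U : Matrix (Fin 3 × Fin 3) (Fin 3 × Fin 3) ℂ).mulVec ψ x))
        = (Complex.normSq ((U : Matrix (Fin 3 × Fin 3) (Fin 3 × Fin 3) ℂ).mulVec ψ x) : ℂ) :=
      Complex.mul_conj _
    rw [h1, Complex.mul_re, Complex.ofReal_re, Complex.ofReal_im, zero_mul, sub_zero]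
    exact mul_nonneg (Complex.normSq_nonneg _) (hdre x).1
  -- value at U = 1
  have hval1 : (((1 : Matrix (Fin 3 × Fin 3) (Fin 3 × Fin 3) ℂ) *
      (Matrix.of fun x y => ψ x * star (ψ y)) *
      (1 : Matrix (Fin 3 × Fin 3) (Fin 3 × Fin 3) ℂ)ᴴ * Hglob).trace).re = 0 := by
    rw [Matrix.conjTranspose_one, one_mul, mul_one, hH, htr]
    rw [show (∑ x, (Matrix.of fun x y => ψ x * star (ψ y)) x x * dC x) = 0 by
      rw [Fintype.sum_prod_type]
      simp [Fin.sum_univ_three, hdC, ψ, Prod.ext_iff]]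
    simp
  refine ⟨?_, ?_, ?_⟩
  · -- energy of ψ is zero
    rw [hH]
    simp only [Matrix.mulVec_diagonal, dotProduct, Pi.star_apply]
    rw [Fintype.sum_prod_type]
    simp [Fin.sum_univ_three, hdC, ψ, Prod.ext_iff]
  · -- the infimum is zero
    refine le_antisymm ?_ (le_ciInf hnonneg)
    have hb : BddBelow (Set.range fun U : Matrix.unitaryGroup (Fin 3 × Fin 3) ℂ =>
        (((U : Matrix (Fin 3 × Fin 3) (Fin 3 × Fin 3) ℂ) *
          (Matrix.of fun x y => ψ x * star (ψ y)) *
          (U : Matrix (Fin 3 × Fin 3) (Fin 3 × Fin 3) ℂ)ᴴ * Hglob).trace).re) :=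
      ⟨0, by rintro y ⟨U, rfl⟩; exact hnonneg U⟩
    exact (ciInf_le hb 1).trans_eq hval1
  · -- ψ is not a product vector
    rintro ⟨u, v, h⟩
    have h00 := h 0 0
    have h11 := h 1 1
    have h01 := h 0 1
    simp only [ψ, Prod.mk.injEq] at h00 h11 h01
    norm_num at h00 h11 h01
    rcases h01 with hu | hv
    · exact hα (by rw [h00, hu, zero_mul])
    · exact hβ (by rw [h11, hv, mul_zero])
end
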